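/- arXiv:0906.2954 — 5 statements merged into one kernel-verified Lean document; each statement's English description precedes it below -/
import Mathlib

section
/- In the free symmetric bimonoidal intermuting category M generated by a set of objects, every arrow term is equal to a developed arrow term, i.e., a composition f_n ∘ … ∘ f₁ ∘ 1_A where each f_i is built from identities and exactly one occurrence of a primitive arrow (an associativity b, symmetry c, unit isomorphism δ or σ, intermutation cᵏ, a w-arrow, or κ) by applying ∨ and ∧. -/
namespace SMI

/-- Objects of the free symmetric bimonoidal intermuting category 𝓜 :
propositional formulas over an infinite set of letters (indexed by ℕ),
the constants ⊥ and ⊤, and the connectives ∨ and ∧. -/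
inductive Frm : Type
  | pl : ℕ → Frm
  | bot : Frm
  | top : Frm
  | or : Frm → Frm → Frm
  | and : Frm → Frm → Frm
  deriving DecidableEq

/-- Arrow terms of 𝓜 , generated from the primitive arrow terms
(associativity b, symmetry c, unit isomorphisms δ and σ, intermutation cᵏ,
the w-arrows and κ) by composition, ∨ and ∧.  The suffixes `To`/`From`
record the direction (`→`/`←`) of the corresponding isomorphism. -/
inductive Tm : Frm → Frm → Type
  | id (A : Frm) : Tm A A
  | comp {A B C : Frm} : Tm B C → Tm A B → Tm A C
  | orM {A B C D : Frm} : Tm A B → Tm C D → Tm (A.or C) (B.or D)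
  | andM {A B C D : Frm} : Tm A B → Tm C D → Tm (A.and C) (B.and D)
  | bOrTo (A B C : Frm) : Tm (A.or (B.or C)) ((A.or B).or C)
  | bOrFrom (A B C : Frm) : Tm ((A.or B).or C) (A.or (B.or C))
  | bAndTo (A B C : Frm) : Tm (A.and (B.and C)) ((A.and B).and C)
  | bAndFrom (A B C : Frm) : Tm ((A.and B).and C) (A.and (B.and C))
  | cOr (A B : Frm) : Tm (A.or B) (B.or A)
  | cAnd (A B : Frm) : Tm (A.and B) (B.and A)
  | dOrTo (A : Frm) : Tm (A.or Frm.bot) A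
  | dOrFrom (A : Frm) : Tm A (A.or Frm.bot)
  | sOrTo (A : Frm) : Tm (Frm.bot.or A) A
  | sOrFrom (A : Frm) : Tm A (Frm.bot.or A)
  | dAndTo (A : Frm) : Tm (A.and Frm.top) A
  | dAndFrom (A : Frm) : Tm A (A.and Frm.top)
  | sAndTo (A : Frm) : Tm (Frm.top.and A) A
  | sAndFrom (A : Frm) : Tm A (Frm.top.and A)
  | ck (A B C D : Frm) : Tm ((A.and B).or (C.and D)) ((A.or C).and (B.or D))
  | wAndTo : Tm (Frm.bot.and Frm.bot) Frm.bot
  | wAndFrom : Tm Frm.bot (Frm.bot.and Frm.bot)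
  | wOrTo : Tm (Frm.top.or Frm.top) Frm.top
  | wOrFrom : Tm Frm.top (Frm.top.or Frm.top)
  | kappa : Tm Frm.bot Frm.top

/-- The equality of arrows of the free SMI category 𝓜 : the smallest
congruence (with respect to ∘, ∨, ∧) containing the equations of the two
symmetric monoidal structures, the naturality and isomorphism conditions,
and the thirteen coherence diagrams (1)-(13) of an SMI category. -/
inductive MEq : ∀ {A B : Frm}, Tm A B → Tm A B → Prop
  -- equivalence
  | refl {A B : Frm} (f : Tm A B) : MEq f f
  | symm {A B : Frm} {f g : Tm A B} : MEq f g → MEq g f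
  | trans {A B : Frm} {f g h : Tm A B} : MEq f g → MEq g h → MEq f h
  -- congruence
  | comp_congr {A B C : Frm} {g g' : Tm B C} {f f' : Tm A B} :
      MEq g g' → MEq f f' → MEq (g.comp f) (g'.comp f')
  | or_congr {A B C D : Frm} {f f' : Tm A B} {g g' : Tm C D} :
      MEq f f' → MEq g g' → MEq (f.orM g) (f'.orM g')
  | and_congr {A B C D : Frm} {f f' : Tm A B} {g g' : Tm C D} :
      MEq f f' → MEq g g' → MEq (f.andM g) (f'.andM g')
  -- category
  | id_comp {A B : Frm} (f : Tm A B) : MEq ((Tm.id B).comp f) f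
  | comp_id {A B : Frm} (f : Tm A B) : MEq (f.comp (Tm.id A)) f
  | comp_assoc {A B C D : Frm} (h : Tm C D) (g : Tm B C) (f : Tm A B) :
      MEq ((h.comp g).comp f) (h.comp (g.comp f))
  -- ∨ and ∧ are biendofunctors
  | or_id (A B : Frm) : MEq ((Tm.id A).orM (Tm.id B)) (Tm.id (A.or B))
  | and_id (A B : Frm) : MEq ((Tm.id A).andM (Tm.id B)) (Tm.id (A.and B))
  | or_comp {A B C A' B' C' : Frm} (g : Tm B C) (f : Tm A B) (g' : Tm B' C') (f' : Tm A' B') :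
      MEq ((g.comp f).orM (g'.comp f')) ((g.orM g').comp (f.orM f'))
  | and_comp {A B C A' B' C' : Frm} (g : Tm B C) (f : Tm A B) (g' : Tm B' C') (f' : Tm A' B') :
      MEq ((g.comp f).andM (g'.comp f')) ((g.andM g').comp (f.andM f'))
  -- naturality
  | bOr_nat {A A' B B' C C' : Frm} (f : Tm A A') (g : Tm B B') (h : Tm C C') :
      MEq ((Tm.bOrTo A' B' C').comp (f.orM (g.orM h))) (((f.orM g).orM h).comp (Tm.bOrTo A B C))
  | bAnd_nat {A A' B B' C C' : Frm} (f : Tm A A') (g : Tm B B') (h : Tm C C') :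
      MEq ((Tm.bAndTo A' B' C').comp (f.andM (g.andM h))) (((f.andM g).andM h).comp (Tm.bAndTo A B C))
  | cOr_nat {A A' B B' : Frm} (f : Tm A A') (g : Tm B B') :
      MEq ((Tm.cOr A' B').comp (f.orM g)) ((g.orM f).comp (Tm.cOr A B))
  | cAnd_nat {A A' B B' : Frm} (f : Tm A A') (g : Tm B B') :
      MEq ((Tm.cAnd A' B').comp (f.andM g)) ((g.andM f).comp (Tm.cAnd A B))
  | dOr_nat {A A' : Frm} (f : Tm A A') :
      MEq ((Tm.dOrTo A').comp (f.orM (Tm.id Frm.bot))) (f.comp (Tm.dOrTo A))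
  | sOr_nat {A A' : Frm} (f : Tm A A') :
      MEq ((Tm.sOrTo A').comp ((Tm.id Frm.bot).orM f)) (f.comp (Tm.sOrTo A))
  | dAnd_nat {A A' : Frm} (f : Tm A A') :
      MEq ((Tm.dAndTo A').comp (f.andM (Tm.id Frm.top))) (f.comp (Tm.dAndTo A))
  | sAnd_nat {A A' : Frm} (f : Tm A A') :
      MEq ((Tm.sAndTo A').comp ((Tm.id Frm.top).andM f)) (f.comp (Tm.sAndTo A))
  | ck_nat {A A' B B' C C' D D' : Frm}
      (f : Tm A A') (g : Tm B B') (h : Tm C C') (k : Tm D D') :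
      MEq ((Tm.ck A' B' C' D').comp ((f.andM g).orM (h.andM k)))
          (((f.orM h).andM (g.orM k)).comp (Tm.ck A B C D))
  -- the primitive arrows other than cᵏ and κ are isomorphisms
  | bOr_iso1 (A B C : Frm) : MEq ((Tm.bOrTo A B C).comp (Tm.bOrFrom A B C)) (Tm.id _)
  | bOr_iso2 (A B C : Frm) : MEq ((Tm.bOrFrom A B C).comp (Tm.bOrTo A B C)) (Tm.id _)
  | bAnd_iso1 (A B C : Frm) : MEq ((Tm.bAndTo A B C).comp (Tm.bAndFrom A B C)) (Tm.id _)
  | bAnd_iso2 (A B C : Frm) : MEq ((Tm.bAndFrom A B C).comp (Tm.bAndTo A B C)) (Tm.id _)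
  | dOr_iso1 (A : Frm) : MEq ((Tm.dOrTo A).comp (Tm.dOrFrom A)) (Tm.id _)
  | dOr_iso2 (A : Frm) : MEq ((Tm.dOrFrom A).comp (Tm.dOrTo A)) (Tm.id _)
  | sOr_iso1 (A : Frm) : MEq ((Tm.sOrTo A).comp (Tm.sOrFrom A)) (Tm.id _)
  | sOr_iso2 (A : Frm) : MEq ((Tm.sOrFrom A).comp (Tm.sOrTo A)) (Tm.id _)
  | dAnd_iso1 (A : Frm) : MEq ((Tm.dAndTo A).comp (Tm.dAndFrom A)) (Tm.id _)
  | dAnd_iso2 (A : Frm) : MEq ((Tm.dAndFrom A).comp (Tm.dAndTo A)) (Tm.id _)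
  | sAnd_iso1 (A : Frm) : MEq ((Tm.sAndTo A).comp (Tm.sAndFrom A)) (Tm.id _)
  | sAnd_iso2 (A : Frm) : MEq ((Tm.sAndFrom A).comp (Tm.sAndTo A)) (Tm.id _)
  | wOr_iso1 : MEq (Tm.wOrTo.comp Tm.wOrFrom) (Tm.id _)
  | wOr_iso2 : MEq (Tm.wOrFrom.comp Tm.wOrTo) (Tm.id _)
  | wAnd_iso1 : MEq (Tm.wAndTo.comp Tm.wAndFrom) (Tm.id _)
  | wAnd_iso2 : MEq (Tm.wAndFrom.comp Tm.wAndTo) (Tm.id _)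
  | cOr_inv (A B : Frm) : MEq ((Tm.cOr B A).comp (Tm.cOr A B)) (Tm.id _)
  | cAnd_inv (A B : Frm) : MEq ((Tm.cAnd B A).comp (Tm.cAnd A B)) (Tm.id _)
  -- Mac Lane coherence for the two symmetric monoidal structures
  | pentagonOr (A B C D : Frm) :
      MEq ((Tm.bOrTo (A.or B) C D).comp (Tm.bOrTo A B (C.or D)))
          (((Tm.bOrTo A B C).orM (Tm.id D)).comp
            ((Tm.bOrTo A (B.or C) D).comp ((Tm.id A).orM (Tm.bOrTo B C D))))
  | pentagonAnd (A B C D : Frm) :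
      MEq ((Tm.bAndTo (A.and B) C D).comp (Tm.bAndTo A B (C.and D)))
          (((Tm.bAndTo A B C).andM (Tm.id D)).comp
            ((Tm.bAndTo A (B.and C) D).comp ((Tm.id A).andM (Tm.bAndTo B C D))))
  | triangleOr (A B : Frm) :
      MEq (((Tm.dOrTo A).orM (Tm.id B)).comp (Tm.bOrTo A Frm.bot B))
          ((Tm.id A).orM (Tm.sOrTo B))
  | triangleAnd (A B : Frm) :
      MEq (((Tm.dAndTo A).andM (Tm.id B)).comp (Tm.bAndTo A Frm.top B))
          ((Tm.id A).andM (Tm.sAndTo B))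
  | hexagonOr (A B C : Frm) :
      MEq ((Tm.bOrTo C A B).comp ((Tm.cOr (A.or B) C).comp (Tm.bOrTo A B C)))
          (((Tm.cOr A C).orM (Tm.id B)).comp
            ((Tm.bOrTo A C B).comp ((Tm.id A).orM (Tm.cOr B C))))
  | hexagonAnd (A B C : Frm) :
      MEq ((Tm.bAndTo C A B).comp ((Tm.cAnd (A.and B) C).comp (Tm.bAndTo A B C)))
          (((Tm.cAnd A C).andM (Tm.id B)).comp
            ((Tm.bAndTo A C B).comp ((Tm.id A).andM (Tm.cAnd B C))))
  | sigmaOr_c (A : Frm) : MEq (Tm.sOrTo A) ((Tm.dOrTo A).comp (Tm.cOr Frm.bot A))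
  | sigmaAnd_c (A : Frm) : MEq (Tm.sAndTo A) ((Tm.dAndTo A).comp (Tm.cAnd Frm.top A))
  -- the thirteen SMI diagrams
  | diag1 (A B C D E F : Frm) :
      MEq ((Tm.bAndTo (A.or D) (B.or E) (C.or F)).comp
            (((Tm.id (A.or D)).andM (Tm.ck B C E F)).comp (Tm.ck A (B.and C) D (E.and F))))
          (((Tm.ck A B D E).andM (Tm.id (C.or F))).comp
            ((Tm.ck (A.and B) C (D.and E) F).comp ((Tm.bAndTo A B C).orM (Tm.bAndTo D E F))))
  | diag2 (A B C D E F : Frm) :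
      MEq (((Tm.bOrTo A B C).andM (Tm.bOrTo D E F)).comp
            ((Tm.ck A D (B.or C) (E.or F)).comp ((Tm.id (A.and D)).orM (Tm.ck B E C F))))
          ((Tm.ck (A.or B) (D.or E) C F).comp
            (((Tm.ck A D B E).orM (Tm.id (C.and F))).comp
              (Tm.bOrTo (A.and D) (B.and E) (C.and F))))
  | diag3 (A B C D : Frm) :
      MEq ((Tm.cAnd (A.or C) (B.or D)).comp (Tm.ck A B C D))
          ((Tm.ck B A D C).comp ((Tm.cAnd A B).orM (Tm.cAnd C D)))
  | diag4 (A B C D : Frm) :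
      MEq ((Tm.ck B D A C).comp (Tm.cOr (A.and C) (B.and D)))
          (((Tm.cOr A B).andM (Tm.cOr C D)).comp (Tm.ck A C B D))
  | diag5 (A B : Frm) :
      MEq (Tm.ck A B Frm.bot Frm.bot)
          (((Tm.dOrFrom A).andM (Tm.dOrFrom B)).comp
            ((Tm.dOrTo (A.and B)).comp ((Tm.id (A.and B)).orM Tm.wAndTo)))
  | diag6 (A B : Frm) :
      MEq (Tm.ck A Frm.top B Frm.top)
          (((Tm.id (A.or B)).andM Tm.wOrFrom).comp
            ((Tm.dAndFrom (A.or B)).comp ((Tm.dAndTo A).orM (Tm.dAndTo B))))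
  | diag7 :
      MEq (Tm.bOrTo Frm.top Frm.top Frm.top)
          ((Tm.wOrFrom.orM (Tm.id Frm.top)).comp ((Tm.id Frm.top).orM Tm.wOrTo))
  | diag8 :
      MEq (Tm.bAndTo Frm.bot Frm.bot Frm.bot)
          ((Tm.wAndFrom.andM (Tm.id Frm.bot)).comp ((Tm.id Frm.bot).andM Tm.wAndTo))
  | diag9 :
      MEq ((Tm.id Frm.top).orM Tm.kappa) (Tm.wOrFrom.comp (Tm.dOrTo Frm.top))
  | diag10 :
      MEq ((Tm.id Frm.bot).andM Tm.kappa) ((Tm.dAndFrom Frm.bot).comp Tm.wAndTo)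
  | diag11 :
      MEq (Tm.ck Frm.top Frm.bot Frm.bot Frm.top)
          (((Tm.dOrFrom Frm.top).andM (Tm.sOrFrom Frm.top)).comp
            ((Tm.dAndFrom Frm.top).comp
              (Tm.kappa.comp
                ((Tm.dOrTo Frm.bot).comp ((Tm.sAndTo Frm.bot).orM (Tm.dAndTo Frm.bot))))))
  | diag12 : MEq (Tm.cOr Frm.top Frm.top) (Tm.wOrFrom.comp Tm.wOrTo)
  | diag13 : MEq (Tm.cAnd Frm.bot Frm.bot) (Tm.wAndFrom.comp Tm.wAndTo)

end SMI

namespace SMI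

/-- The primitive arrow terms : b, c, δ, σ, cᵏ, w and κ. -/
inductive IsGen : ∀ {A B : Frm}, Tm A B → Prop
  | bOrTo (A B C : Frm) : IsGen (Tm.bOrTo A B C)
  | bOrFrom (A B C : Frm) : IsGen (Tm.bOrFrom A B C)
  | bAndTo (A B C : Frm) : IsGen (Tm.bAndTo A B C)
  | bAndFrom (A B C : Frm) : IsGen (Tm.bAndFrom A B C)
  | cOr (A B : Frm) : IsGen (Tm.cOr A B)
  | cAnd (A B : Frm) : IsGen (Tm.cAnd A B)
  | dOrTo (A : Frm) : IsGen (Tm.dOrTo A)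
  | dOrFrom (A : Frm) : IsGen (Tm.dOrFrom A)
  | sOrTo (A : Frm) : IsGen (Tm.sOrTo A)
  | sOrFrom (A : Frm) : IsGen (Tm.sOrFrom A)
  | dAndTo (A : Frm) : IsGen (Tm.dAndTo A)
  | dAndFrom (A : Frm) : IsGen (Tm.dAndFrom A)
  | sAndTo (A : Frm) : IsGen (Tm.sAndTo A)
  | sAndFrom (A : Frm) : IsGen (Tm.sAndFrom A)
  | ck (A B C D : Frm) : IsGen (Tm.ck A B C D)
  | wAndTo : IsGen Tm.wAndTo
  | wAndFrom : IsGen Tm.wAndFrom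
  | wOrTo : IsGen Tm.wOrTo
  | wOrFrom : IsGen Tm.wOrFrom
  | kappa : IsGen Tm.kappa

/-- A b-, c-, δ-, σ-, cᵏ-, w- or κ-term : a composition-free arrow term
built from identities and exactly one occurrence of a primitive arrow term
with the help of ∨ and ∧. -/
inductive OneHead : ∀ {A B : Frm}, Tm A B → Prop
  | base {A B : Frm} {f : Tm A B} : IsGen f → OneHead f
  | orl {A B : Frm} {f : Tm A B} (C : Frm) : OneHead f → OneHead (f.orM (Tm.id C))
  | orr {A B : Frm} {f : Tm A B} (C : Frm) : OneHead f → OneHead ((Tm.id C).orM f)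
  | andl {A B : Frm} {f : Tm A B} (C : Frm) : OneHead f → OneHead (f.andM (Tm.id C))
  | andr {A B : Frm} {f : Tm A B} (C : Frm) : OneHead f → OneHead ((Tm.id C).andM f)

/-- A developed arrow term : `fₙ ∘ … ∘ f₁ ∘ 1_A` where each `fᵢ` is a
b-, c-, δ-, σ-, cᵏ-, w- or κ-term. -/
inductive Developed : ∀ {A B : Frm}, Tm A B → Prop
  | base (A : Frm) : Developed (Tm.id A)
  | step {A B C : Frm} {g : Tm A B} {f : Tm B C} :
      Developed g → OneHead f → Developed (f.comp g)

/-! Developed terms are closed, up to equality in 𝓜, under composition (by associativity) and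
under `∨`/`∧` with an identity on one side: bifunctoriality distributes such a whiskering over the
factors `fₙ ∘ … ∘ f₁` and keeps each factor a one-primitive term. Since `f ∨ g = (f ∨ 1) ∘ (1 ∨ g)`,
and likewise for `∧`, induction on arrow terms shows that every term is developable. -/

def Developable {A B : Frm} (f : Tm A B) : Prop :=
  ∃ g : Tm A B, Developed g ∧ MEq f g

section Developable

variable {A B C D : Frm}

theorem Developable.of_meq {f f' : Tm A B} (e : MEq f f') (hf' : Developable f') :
    Developable f :=
  let ⟨g, hg, e'⟩ := hf'
  ⟨g, hg, e.trans e'⟩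

theorem OneHead.developable {f : Tm A B} (hf : OneHead f) : Developable f :=
  ⟨f.comp (Tm.id A), (Developed.base A).step hf, (MEq.comp_id f).symm⟩

theorem Developed.developable_comp {f : Tm B C} {g : Tm A B} (hf : Developed f)
    (hg : Developable g) : Developable (f.comp g) := by
  induction hf with
  | base => exact hg.of_meq (MEq.id_comp g)
  | step _ hh ih =>
    obtain ⟨k, hk, e⟩ := ih
    exact ⟨_, hk.step hh, (MEq.comp_assoc _ _ _).trans (MEq.comp_congr (MEq.refl _) e)⟩

theorem Developable.comp {f : Tm B C} {g : Tm A B} (hf : Developable f) (hg : Developable g) :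
    Developable (f.comp g) :=
  let ⟨_, hf', e⟩ := hf
  (hf'.developable_comp hg).of_meq (MEq.comp_congr e (MEq.refl g))

theorem Developable.map {φ : Frm → Frm} (F : ∀ {A B : Frm}, Tm A B → Tm (φ A) (φ B))
    (map_id : ∀ A, MEq (F (Tm.id A)) (Tm.id (φ A)))
    (map_comp : ∀ {A B C : Frm} (g : Tm B C) (f : Tm A B),
      MEq (F (g.comp f)) ((F g).comp (F f)))
    (map_congr : ∀ {A B : Frm} {f f' : Tm A B}, MEq f f' → MEq (F f) (F f'))
    (map_oneHead : ∀ {A B : Frm} {f : Tm A B}, OneHead f → OneHead (F f))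
    {f : Tm A B} (hf : Developable f) : Developable (F f) := by
  suffices h : ∀ {A B : Frm} {g : Tm A B}, Developed g → Developable (F g) by
    obtain ⟨g, hg, e⟩ := hf
    exact (h hg).of_meq (map_congr e)
  intro A B g hg
  induction hg with
  | base => exact Developable.of_meq (map_id A) ⟨_, .base _, MEq.refl _⟩
  | step _ hh ih => exact ((map_oneHead hh).developable.comp ih).of_meq (map_comp _ _)

theorem Developable.orM_id {f : Tm A B} (C : Frm) (hf : Developable f) :
    Developable (f.orM (Tm.id C)) :=
  hf.map (φ := (·.or C)) (·.orM (Tm.id C)) (fun A => MEq.or_id A C)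
    (fun g f => (MEq.or_congr (MEq.refl _) (MEq.id_comp _).symm).trans (MEq.or_comp g f _ _))
    (fun e => MEq.or_congr e (MEq.refl _)) (OneHead.orl C)

theorem Developable.id_orM {f : Tm A B} (C : Frm) (hf : Developable f) :
    Developable ((Tm.id C).orM f) :=
  hf.map (φ := C.or) ((Tm.id C).orM ·) (fun A => MEq.or_id C A)
    (fun g f => (MEq.or_congr (MEq.id_comp _).symm (MEq.refl _)).trans (MEq.or_comp _ _ g f))
    (fun e => MEq.or_congr (MEq.refl _) e) (OneHead.orr C)

theorem Developable.andM_id {f : Tm A B} (C : Frm) (hf : Developable f) :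
    Developable (f.andM (Tm.id C)) :=
  hf.map (φ := (·.and C)) (·.andM (Tm.id C)) (fun A => MEq.and_id A C)
    (fun g f => (MEq.and_congr (MEq.refl _) (MEq.id_comp _).symm).trans (MEq.and_comp g f _ _))
    (fun e => MEq.and_congr e (MEq.refl _)) (OneHead.andl C)

theorem Developable.id_andM {f : Tm A B} (C : Frm) (hf : Developable f) :
    Developable ((Tm.id C).andM f) :=
  hf.map (φ := C.and) ((Tm.id C).andM ·) (fun A => MEq.and_id C A)
    (fun g f => (MEq.and_congr (MEq.id_comp _).symm (MEq.refl _)).trans (MEq.and_comp _ _ g f))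
    (fun e => MEq.and_congr (MEq.refl _) e) (OneHead.andr C)

theorem Developable.orM {f : Tm A B} {g : Tm C D} (hf : Developable f) (hg : Developable g) :
    Developable (f.orM g) :=
  ((hf.orM_id D).comp (hg.id_orM A)).of_meq <|
    (MEq.or_congr (MEq.comp_id f).symm (MEq.id_comp g).symm).trans
      (MEq.or_comp f (Tm.id A) (Tm.id D) g)

theorem Developable.andM {f : Tm A B} {g : Tm C D} (hf : Developable f) (hg : Developable g) :
    Developable (f.andM g) :=
  ((hf.andM_id D).comp (hg.id_andM A)).of_meq <|
    (MEq.and_congr (MEq.comp_id f).symm (MEq.id_comp g).symm).trans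
      (MEq.and_comp f (Tm.id A) (Tm.id D) g)

end Developable

/-- In the free SMI category 𝓜 , every arrow term is equal to a developed
arrow term. -/
theorem every_arrow_term_is_developed {A B : Frm} (f : Tm A B) :
    ∃ g : Tm A B, Developed g ∧ MEq f g := by
  induction f with
  | id A => exact ⟨Tm.id A, Developed.base A, MEq.refl _⟩
  | comp _ _ ihf ihg => exact Developable.comp ihf ihg
  | orM _ _ ihf ihg => exact Developable.orM ihf ihg
  | andM _ _ ihf ihg => exact Developable.andM ihf ihg
  | _ => exact (OneHead.base (by constructor)).developable

end SMI
end

section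
/- In the free SMI category M, if no propositional letter occurs in the objects A and B, then any arrow term f : A → B defined using only the unit isomorphisms δ, σ, the w-arrows and κ is either equal to an N-term (defined using only δ, σ, w) or equal to a composite h'' ∘ κ ∘ h' with h', h'' N-terms; consequently any two arrows f, g : A → B defined using only δ, σ, w, κ are equal. -/
namespace SMI

/-- No propositional letter occurs in the formula. -/
def NoLtr : Frm → Prop
  | Frm.pl _ => False
  | Frm.bot => True
  | Frm.top => True
  | Frm.or A B => NoLtr A ∧ NoLtr B
  | Frm.and A B => NoLtr A ∧ NoLtr B

/-- The primitive δ-, σ- and w-arrows. -/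
inductive IsNGen : ∀ {A B : Frm}, Tm A B → Prop
  | dOrTo (A : Frm) : IsNGen (Tm.dOrTo A)
  | dOrFrom (A : Frm) : IsNGen (Tm.dOrFrom A)
  | sOrTo (A : Frm) : IsNGen (Tm.sOrTo A)
  | sOrFrom (A : Frm) : IsNGen (Tm.sOrFrom A)
  | dAndTo (A : Frm) : IsNGen (Tm.dAndTo A)
  | dAndFrom (A : Frm) : IsNGen (Tm.dAndFrom A)
  | sAndTo (A : Frm) : IsNGen (Tm.sAndTo A)
  | sAndFrom (A : Frm) : IsNGen (Tm.sAndFrom A)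
  | wAndTo : IsNGen Tm.wAndTo
  | wAndFrom : IsNGen Tm.wAndFrom
  | wOrTo : IsNGen Tm.wOrTo
  | wOrFrom : IsNGen Tm.wOrFrom

/-- N_{⊤,⊥}-terms : arrow terms defined by δ, σ and w (and identities),
using composition, ∨ and ∧. -/
inductive NTm : ∀ {A B : Frm}, Tm A B → Prop
  | id (A : Frm) : NTm (Tm.id A)
  | gen {A B : Frm} {f : Tm A B} : IsNGen f → NTm f
  | comp {A B C : Frm} {g : Tm B C} {f : Tm A B} : NTm g → NTm f → NTm (g.comp f)
  | orM {A B C D : Frm} {f : Tm A B} {g : Tm C D} : NTm f → NTm g → NTm (f.orM g)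
  | andM {A B C D : Frm} {f : Tm A B} {g : Tm C D} : NTm f → NTm g → NTm (f.andM g)

/-- Arrow terms defined by δ, σ, w and κ. -/
inductive DSWK : ∀ {A B : Frm}, Tm A B → Prop
  | id (A : Frm) : DSWK (Tm.id A)
  | gen {A B : Frm} {f : Tm A B} : IsNGen f → DSWK f
  | kappa : DSWK Tm.kappa
  | comp {A B C : Frm} {g : Tm B C} {f : Tm A B} : DSWK g → DSWK f → DSWK (g.comp f)
  | orM {A B C D : Frm} {f : Tm A B} {g : Tm C D} : DSWK f → DSWK g → DSWK (f.orM g)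
  | andM {A B C D : Frm} {f : Tm A B} {g : Tm C D} : DSWK f → DSWK g → DSWK (f.andM g)

end SMI

/-!
Every letterless formula `C` is isomorphic, through δ-, σ- and w-arrows, to the unit `⊥` or `⊤`
named by its truth value (`normIso`). Arrow terms built from δ, σ, w and κ never lower the truth
value, and by induction on the term each of them is equal to the canonical composite of
`normIso A`, then `𝟙` or `κ`, then `(normIso B)⁻¹`. The inductive steps for `∨` and `∧` come down
to finitely many squares between `⊥` and `⊤`, which commute by the SMI diagrams (9), (10), (12),
(13) and by Kelly's identity `δ = σ` at the unit, here taken from Mathlib's theory of monoidal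
categories. As the canonical composite depends only on `A` and `B`, any two such terms are equal.
-/

namespace SMI

open CategoryTheory MonoidalCategory

instance tmSetoid (A B : Frm) : Setoid (Tm A B) :=
  ⟨MEq, ⟨MEq.refl, MEq.symm, MEq.trans⟩⟩

instance : Category Frm where
  Hom A B := Quotient (tmSetoid A B)
  id A := ⟦Tm.id A⟧
  comp f g :=
    Quotient.map₂ (fun f g => Tm.comp g f) (fun _ _ hf _ _ hg => MEq.comp_congr hg hf) f g
  id_comp f := Quotient.inductionOn f fun f => Quotient.sound (MEq.comp_id f)
  comp_id f := Quotient.inductionOn f fun f => Quotient.sound (MEq.id_comp f)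
  assoc f g h :=
    Quotient.inductionOn₃ f g h fun f g h => Quotient.sound (MEq.comp_assoc h g f).symm

def Tm.toHom {A B : Frm} (f : Tm A B) : A ⟶ B := ⟦f⟧

@[elab_as_elim]
lemma Tm.hom_induction {A B : Frm} {motive : (A ⟶ B) → Prop}
    (h : ∀ f : Tm A B, motive f.toHom) (φ : A ⟶ B) : motive φ :=
  Quotient.ind h φ

lemma Tm.toHom_eq_toHom_iff {A B : Frm} {f g : Tm A B} : f.toHom = g.toHom ↔ MEq f g :=
  Quotient.eq

lemma Tm.toHom_comp {A B C : Frm} (g : Tm B C) (f : Tm A B) :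
    (g.comp f).toHom = f.toHom ≫ g.toHom := rfl

def orHom {A B C D : Frm} (f : A ⟶ B) (g : C ⟶ D) : A.or C ⟶ B.or D :=
  Quotient.map₂ Tm.orM (fun _ _ hf _ _ hg => MEq.or_congr hf hg) f g

def andHom {A B C D : Frm} (f : A ⟶ B) (g : C ⟶ D) : A.and C ⟶ B.and D :=
  Quotient.map₂ Tm.andM (fun _ _ hf _ _ hg => MEq.and_congr hf hg) f g

lemma Tm.toHom_orM {A B C D : Frm} (f : Tm A B) (g : Tm C D) :
    (f.orM g).toHom = orHom f.toHom g.toHom := rfl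

lemma Tm.toHom_andM {A B C D : Frm} (f : Tm A B) (g : Tm C D) :
    (f.andM g).toHom = andHom f.toHom g.toHom := rfl

@[simp] lemma orHom_id (A B : Frm) : orHom (𝟙 A) (𝟙 B) = 𝟙 (A.or B) :=
  Quotient.sound (MEq.or_id A B)

@[simp] lemma andHom_id (A B : Frm) : andHom (𝟙 A) (𝟙 B) = 𝟙 (A.and B) :=
  Quotient.sound (MEq.and_id A B)

lemma orHom_comp {A B C A' B' C' : Frm} (f : A ⟶ B) (g : B ⟶ C) (f' : A' ⟶ B')
    (g' : B' ⟶ C') :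
    orHom (f ≫ g) (f' ≫ g') = orHom f f' ≫ orHom g g' := by
  induction f using Tm.hom_induction
  induction g using Tm.hom_induction
  induction f' using Tm.hom_induction
  induction g' using Tm.hom_induction
  exact Quotient.sound (MEq.or_comp _ _ _ _)

lemma andHom_comp {A B C A' B' C' : Frm} (f : A ⟶ B) (g : B ⟶ C) (f' : A' ⟶ B')
    (g' : B' ⟶ C') :
    andHom (f ≫ g) (f' ≫ g') = andHom f f' ≫ andHom g g' := by
  induction f using Tm.hom_induction
  induction g using Tm.hom_induction
  induction f' using Tm.hom_induction
  induction g' using Tm.hom_induction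
  exact Quotient.sound (MEq.and_comp _ _ _ _)

def orIso {A B C D : Frm} (e : A ≅ B) (e' : C ≅ D) : A.or C ≅ B.or D where
  hom := orHom e.hom e'.hom
  inv := orHom e.inv e'.inv
  hom_inv_id := by rw [← orHom_comp, e.hom_inv_id, e'.hom_inv_id, orHom_id]
  inv_hom_id := by rw [← orHom_comp, e.inv_hom_id, e'.inv_hom_id, orHom_id]

def andIso {A B C D : Frm} (e : A ≅ B) (e' : C ≅ D) : A.and C ≅ B.and D where
  hom := andHom e.hom e'.hom
  inv := andHom e.inv e'.inv
  hom_inv_id := by rw [← andHom_comp, e.hom_inv_id, e'.hom_inv_id, andHom_id]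
  inv_hom_id := by rw [← andHom_comp, e.inv_hom_id, e'.inv_hom_id, andHom_id]

def kappa : Frm.bot ⟶ Frm.top := Tm.kappa.toHom

def dOr (A : Frm) : A.or Frm.bot ≅ A :=
  ⟨(Tm.dOrTo A).toHom, (Tm.dOrFrom A).toHom, Quotient.sound (MEq.dOr_iso2 A),
    Quotient.sound (MEq.dOr_iso1 A)⟩

def sOr (A : Frm) : Frm.bot.or A ≅ A :=
  ⟨(Tm.sOrTo A).toHom, (Tm.sOrFrom A).toHom, Quotient.sound (MEq.sOr_iso2 A),
    Quotient.sound (MEq.sOr_iso1 A)⟩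

def dAnd (A : Frm) : A.and Frm.top ≅ A :=
  ⟨(Tm.dAndTo A).toHom, (Tm.dAndFrom A).toHom, Quotient.sound (MEq.dAnd_iso2 A),
    Quotient.sound (MEq.dAnd_iso1 A)⟩

def sAnd (A : Frm) : Frm.top.and A ≅ A :=
  ⟨(Tm.sAndTo A).toHom, (Tm.sAndFrom A).toHom, Quotient.sound (MEq.sAnd_iso2 A),
    Quotient.sound (MEq.sAnd_iso1 A)⟩

def wOr : Frm.top.or Frm.top ≅ Frm.top :=
  ⟨Tm.wOrTo.toHom, Tm.wOrFrom.toHom, Quotient.sound MEq.wOr_iso2, Quotient.sound MEq.wOr_iso1⟩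

def wAnd : Frm.bot.and Frm.bot ≅ Frm.bot :=
  ⟨Tm.wAndTo.toHom, Tm.wAndFrom.toHom, Quotient.sound MEq.wAnd_iso2, Quotient.sound MEq.wAnd_iso1⟩

def bOr (A B C : Frm) : A.or (B.or C) ≅ (A.or B).or C :=
  ⟨(Tm.bOrTo A B C).toHom, (Tm.bOrFrom A B C).toHom, Quotient.sound (MEq.bOr_iso2 A B C),
    Quotient.sound (MEq.bOr_iso1 A B C)⟩

def bAnd (A B C : Frm) : A.and (B.and C) ≅ (A.and B).and C :=
  ⟨(Tm.bAndTo A B C).toHom, (Tm.bAndFrom A B C).toHom, Quotient.sound (MEq.bAnd_iso2 A B C),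
    Quotient.sound (MEq.bAnd_iso1 A B C)⟩

def cOr (A B : Frm) : A.or B ≅ B.or A :=
  ⟨(Tm.cOr A B).toHom, (Tm.cOr B A).toHom, Quotient.sound (MEq.cOr_inv A B),
    Quotient.sound (MEq.cOr_inv B A)⟩

def cAnd (A B : Frm) : A.and B ≅ B.and A :=
  ⟨(Tm.cAnd A B).toHom, (Tm.cAnd B A).toHom, Quotient.sound (MEq.cAnd_inv A B),
    Quotient.sound (MEq.cAnd_inv B A)⟩

lemma dOr_naturality {A B : Frm} (f : A ⟶ B) : orHom f (𝟙 _) ≫ (dOr B).hom = (dOr A).hom ≫ f := by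
  induction f using Tm.hom_induction
  exact Quotient.sound (MEq.dOr_nat _)

lemma sOr_naturality {A B : Frm} (f : A ⟶ B) : orHom (𝟙 _) f ≫ (sOr B).hom = (sOr A).hom ≫ f := by
  induction f using Tm.hom_induction
  exact Quotient.sound (MEq.sOr_nat _)

lemma dAnd_naturality {A B : Frm} (f : A ⟶ B) :
    andHom f (𝟙 _) ≫ (dAnd B).hom = (dAnd A).hom ≫ f := by
  induction f using Tm.hom_induction
  exact Quotient.sound (MEq.dAnd_nat _)

lemma sAnd_naturality {A B : Frm} (f : A ⟶ B) :
    andHom (𝟙 _) f ≫ (sAnd B).hom = (sAnd A).hom ≫ f := by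
  induction f using Tm.hom_induction
  exact Quotient.sound (MEq.sAnd_nat _)

lemma bOr_naturality {A A' B B' C C' : Frm} (f : A ⟶ A') (g : B ⟶ B') (h : C ⟶ C') :
    orHom f (orHom g h) ≫ (bOr A' B' C').hom = (bOr A B C).hom ≫ orHom (orHom f g) h := by
  induction f using Tm.hom_induction
  induction g using Tm.hom_induction
  induction h using Tm.hom_induction
  exact Quotient.sound (MEq.bOr_nat _ _ _)

lemma bAnd_naturality {A A' B B' C C' : Frm} (f : A ⟶ A') (g : B ⟶ B') (h : C ⟶ C') :
    andHom f (andHom g h) ≫ (bAnd A' B' C').hom = (bAnd A B C).hom ≫ andHom (andHom f g) h := by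
  induction f using Tm.hom_induction
  induction g using Tm.hom_induction
  induction h using Tm.hom_induction
  exact Quotient.sound (MEq.bAnd_nat _ _ _)

lemma cOr_naturality {A A' B B' : Frm} (f : A ⟶ A') (g : B ⟶ B') :
    orHom f g ≫ (cOr A' B').hom = (cOr A B).hom ≫ orHom g f := by
  induction f using Tm.hom_induction
  induction g using Tm.hom_induction
  exact Quotient.sound (MEq.cOr_nat _ _)

lemma cAnd_naturality {A A' B B' : Frm} (f : A ⟶ A') (g : B ⟶ B') :
    andHom f g ≫ (cAnd A' B').hom = (cAnd A B).hom ≫ andHom g f := by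
  induction f using Tm.hom_induction
  induction g using Tm.hom_induction
  exact Quotient.sound (MEq.cAnd_nat _ _)

/- Writing the tensor in reverse order, `X ⊗ Y := Y ∨ X`, makes Mathlib's associator
`(X ⊗ Y) ⊗ Z ≅ X ⊗ (Y ⊗ Z)` the arrow `b→`, so that the pentagon, triangle and naturality
equations of `MEq` are literally those of `MonoidalCategory`. -/
abbrev orMonoidal : MonoidalCategory Frm :=
  letI : MonoidalCategoryStruct Frm :=
    { tensorObj X Y := Y.or X
      whiskerLeft X _ _ f := orHom f (𝟙 X)
      whiskerRight f Y := orHom (𝟙 Y) f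
      tensorHom f g := orHom g f
      tensorUnit := Frm.bot
      associator X Y Z := bOr Z Y X
      leftUnitor := dOr
      rightUnitor := sOr }
  .ofTensorHom (fun _ _ => orHom_id _ _) (fun _ _ _ _ => rfl) (fun _ _ => rfl)
    (fun _ _ _ _ => (orHom_comp _ _ _ _).symm) (fun _ _ _ => bOr_naturality _ _ _)
    dOr_naturality sOr_naturality
    (fun W X Y Z => by
      have := Tm.toHom_eq_toHom_iff.2 (MEq.pentagonOr Z Y X W)
      simp only [Tm.toHom_comp, Category.assoc] at this
      exact this.symm)
    (fun X Y => Quotient.sound (MEq.triangleOr Y X))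

abbrev andMonoidal : MonoidalCategory Frm :=
  letI : MonoidalCategoryStruct Frm :=
    { tensorObj X Y := Y.and X
      whiskerLeft X _ _ f := andHom f (𝟙 X)
      whiskerRight f Y := andHom (𝟙 Y) f
      tensorHom f g := andHom g f
      tensorUnit := Frm.top
      associator X Y Z := bAnd Z Y X
      leftUnitor := dAnd
      rightUnitor := sAnd }
  .ofTensorHom (fun _ _ => andHom_id _ _) (fun _ _ _ _ => rfl) (fun _ _ => rfl)
    (fun _ _ _ _ => (andHom_comp _ _ _ _).symm) (fun _ _ _ => bAnd_naturality _ _ _)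
    dAnd_naturality sAnd_naturality
    (fun W X Y Z => by
      have := Tm.toHom_eq_toHom_iff.2 (MEq.pentagonAnd Z Y X W)
      simp only [Tm.toHom_comp, Category.assoc] at this
      exact this.symm)
    (fun X Y => Quotient.sound (MEq.triangleAnd Y X))

lemma dOr_bot : dOr Frm.bot = sOr Frm.bot :=
  Iso.ext (@unitors_equal Frm _ orMonoidal)

lemma dAnd_top : dAnd Frm.top = sAnd Frm.top :=
  Iso.ext (@unitors_equal Frm _ andMonoidal)

lemma orHom_id_kappa_comp_wOr : orHom (𝟙 Frm.top) kappa ≫ wOr.hom = (dOr Frm.top).hom := by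
  have h9 : orHom (𝟙 Frm.top) kappa = (dOr Frm.top).hom ≫ wOr.inv :=
    Tm.toHom_eq_toHom_iff.2 MEq.diag9
  rw [h9, Category.assoc, Iso.inv_hom_id, Category.comp_id]

lemma orHom_kappa_id_comp_wOr : orHom kappa (𝟙 Frm.top) ≫ wOr.hom = (sOr Frm.top).hom := by
  have h12 : (cOr Frm.top Frm.top).hom = wOr.hom ≫ wOr.inv := Tm.toHom_eq_toHom_iff.2 MEq.diag12
  have hσ : (sOr Frm.top).hom = (cOr Frm.bot Frm.top).hom ≫ (dOr Frm.top).hom :=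
    Tm.toHom_eq_toHom_iff.2 (MEq.sigmaOr_c _)
  have hc : (cOr Frm.top Frm.top).hom ≫ wOr.hom = wOr.hom := by
    rw [h12, Category.assoc, Iso.inv_hom_id, Category.comp_id]
  rw [← hc, ← Category.assoc, cOr_naturality, Category.assoc, orHom_id_kappa_comp_wOr, hσ]

lemma orHom_kappa_kappa_comp_wOr : orHom kappa kappa ≫ wOr.hom = (dOr Frm.bot).hom ≫ kappa := by
  have h : orHom kappa kappa = orHom kappa (𝟙 Frm.bot) ≫ orHom (𝟙 Frm.top) kappa := by
    rw [← orHom_comp, Category.comp_id, Category.id_comp]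
  rw [h, Category.assoc, orHom_id_kappa_comp_wOr, dOr_naturality]

lemma andHom_id_kappa_comp_dAnd : andHom (𝟙 Frm.bot) kappa ≫ (dAnd Frm.bot).hom = wAnd.hom := by
  have h10 : andHom (𝟙 Frm.bot) kappa = wAnd.hom ≫ (dAnd Frm.bot).inv :=
    Tm.toHom_eq_toHom_iff.2 MEq.diag10
  rw [h10, Category.assoc, Iso.inv_hom_id, Category.comp_id]

lemma andHom_kappa_id_comp_sAnd : andHom kappa (𝟙 Frm.bot) ≫ (sAnd Frm.bot).hom = wAnd.hom := by
  have h13 : (cAnd Frm.bot Frm.bot).hom = wAnd.hom ≫ wAnd.inv :=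
    Tm.toHom_eq_toHom_iff.2 MEq.diag13
  have hσ : (sAnd Frm.bot).hom = (cAnd Frm.top Frm.bot).hom ≫ (dAnd Frm.bot).hom :=
    Tm.toHom_eq_toHom_iff.2 (MEq.sigmaAnd_c _)
  rw [hσ, ← Category.assoc, cAnd_naturality, Category.assoc, andHom_id_kappa_comp_dAnd, h13,
    Category.assoc, Iso.inv_hom_id, Category.comp_id]

lemma andHom_kappa_kappa_comp_dAnd :
    andHom kappa kappa ≫ (dAnd Frm.top).hom = wAnd.hom ≫ kappa := by
  have h : andHom kappa kappa = andHom (𝟙 Frm.bot) kappa ≫ andHom kappa (𝟙 Frm.top) := by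
    rw [← andHom_comp, Category.comp_id, Category.id_comp]
  rw [h, Category.assoc, dAnd_naturality, ← Category.assoc, andHom_id_kappa_comp_dAnd]

def Frm.ofBool : Bool → Frm
  | false => Frm.bot
  | true => Frm.top

def Frm.eval : Frm → Bool
  | Frm.pl _ => false
  | Frm.bot => false
  | Frm.top => true
  | Frm.or A B => A.eval || B.eval
  | Frm.and A B => A.eval && B.eval

def ofBoolHom : (a b : Bool) → a ≤ b → (Frm.ofBool a ⟶ Frm.ofBool b)
  | false, false, _ => 𝟙 _
  | false, true, _ => kappa
  | true, true, _ => 𝟙 _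
  | true, false, h => absurd h (by decide)

lemma ofBoolHom_self (a : Bool) : ofBoolHom a a le_rfl = 𝟙 _ := by
  cases a <;> rfl

lemma ofBoolHom_comp {a b c : Bool} (h₁ : a ≤ b) (h₂ : b ≤ c) :
    ofBoolHom a b h₁ ≫ ofBoolHom b c h₂ = ofBoolHom a c (h₁.trans h₂) := by
  cases a <;> cases b <;> cases c <;> first
    | exact absurd h₁ (by decide) | exact absurd h₂ (by decide)
    | dsimp only [ofBoolHom, Frm.ofBool]; simp only [Category.id_comp, Category.comp_id]

def ofBoolOrIso : (a b : Bool) → (Frm.ofBool a).or (Frm.ofBool b) ≅ Frm.ofBool (a || b)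
  | false, false => dOr _
  | false, true => sOr _
  | true, false => dOr _
  | true, true => wOr

def ofBoolAndIso : (a b : Bool) → (Frm.ofBool a).and (Frm.ofBool b) ≅ Frm.ofBool (a && b)
  | false, false => wAnd
  | false, true => dAnd _
  | true, false => sAnd _
  | true, true => dAnd _

def normIso : (C : Frm) → NoLtr C → (C ≅ Frm.ofBool C.eval)
  | Frm.pl _, h => h.elim
  | Frm.bot, _ => Iso.refl _
  | Frm.top, _ => Iso.refl _
  | Frm.or A B, h => orIso (normIso A h.1) (normIso B h.2) ≪≫ ofBoolOrIso _ _
  | Frm.and A B, h => andIso (normIso A h.1) (normIso B h.2) ≪≫ ofBoolAndIso _ _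

def canonicalHom {A B : Frm} (hA : NoLtr A) (hB : NoLtr B) (h : A.eval ≤ B.eval) : A ⟶ B :=
  (normIso A hA).hom ≫ ofBoolHom _ _ h ≫ (normIso B hB).inv

lemma orHom_ofBoolHom_comp_ofBoolOrIso {a a' b b' : Bool} (h : a ≤ a') (h' : b ≤ b') :
    orHom (ofBoolHom a a' h) (ofBoolHom b b' h') ≫ (ofBoolOrIso a' b').hom =
      (ofBoolOrIso a b).hom ≫ ofBoolHom (a || b) (a' || b') (sup_le_sup h h') := by
  cases a <;> cases a' <;> cases b <;> cases b' <;> first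
    | exact absurd h (by decide) | exact absurd h' (by decide)
    | dsimp only [Bool.or, ofBoolHom, ofBoolOrIso, Frm.ofBool]
      try simp only [orHom_id, Category.id_comp, Category.comp_id]
  · rw [sOr_naturality, dOr_bot]
  · exact dOr_naturality kappa
  · exact orHom_kappa_kappa_comp_wOr
  · exact orHom_kappa_id_comp_wOr
  · exact orHom_id_kappa_comp_wOr

lemma andHom_ofBoolHom_comp_ofBoolAndIso {a a' b b' : Bool} (h : a ≤ a') (h' : b ≤ b') :
    andHom (ofBoolHom a a' h) (ofBoolHom b b' h') ≫ (ofBoolAndIso a' b').hom =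
      (ofBoolAndIso a b).hom ≫ ofBoolHom (a && b) (a' && b') (inf_le_inf h h') := by
  cases a <;> cases a' <;> cases b <;> cases b' <;> first
    | exact absurd h (by decide) | exact absurd h' (by decide)
    | dsimp only [Bool.and, ofBoolHom, ofBoolAndIso, Frm.ofBool]
      try simp only [andHom_id, Category.id_comp, Category.comp_id]
  · exact andHom_id_kappa_comp_dAnd
  · exact andHom_kappa_id_comp_sAnd
  · exact andHom_kappa_kappa_comp_dAnd
  · exact dAnd_naturality kappa
  · rw [dAnd_top, sAnd_naturality]

lemma normIso_bot (h : NoLtr Frm.bot) : normIso Frm.bot h = Iso.refl _ := rfl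

lemma normIso_top (h : NoLtr Frm.top) : normIso Frm.top h = Iso.refl _ := rfl

lemma normIso_or_hom {A B : Frm} (h : NoLtr (A.or B)) :
    (normIso (A.or B) h).hom =
      orHom (normIso A h.1).hom (normIso B h.2).hom ≫ (ofBoolOrIso _ _).hom :=
  rfl

lemma normIso_or_inv {A B : Frm} (h : NoLtr (A.or B)) :
    (normIso (A.or B) h).inv =
      (ofBoolOrIso _ _).inv ≫ orHom (normIso A h.1).inv (normIso B h.2).inv :=
  rfl

lemma normIso_and_hom {A B : Frm} (h : NoLtr (A.and B)) :
    (normIso (A.and B) h).hom =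
      andHom (normIso A h.1).hom (normIso B h.2).hom ≫ (ofBoolAndIso _ _).hom :=
  rfl

lemma normIso_and_inv {A B : Frm} (h : NoLtr (A.and B)) :
    (normIso (A.and B) h).inv =
      (ofBoolAndIso _ _).inv ≫ andHom (normIso A h.1).inv (normIso B h.2).inv :=
  rfl

lemma canonicalHom_self {A : Frm} (hA : NoLtr A) : canonicalHom hA hA le_rfl = 𝟙 A := by
  simp [canonicalHom, ofBoolHom_self]

lemma canonicalHom_comp {A B C : Frm} (hA : NoLtr A) (hB : NoLtr B) (hC : NoLtr C)
    (h₁ : A.eval ≤ B.eval) (h₂ : B.eval ≤ C.eval) :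
    canonicalHom hA hB h₁ ≫ canonicalHom hB hC h₂ = canonicalHom hA hC (h₁.trans h₂) := by
  simp only [canonicalHom, Category.assoc, Iso.inv_hom_id_assoc]
  rw [← Category.assoc (ofBoolHom _ _ h₁), ofBoolHom_comp]

lemma canonicalHom_or {A B C D : Frm} (hAC : NoLtr (A.or C)) (hBD : NoLtr (B.or D))
    (h₁ : A.eval ≤ B.eval) (h₂ : C.eval ≤ D.eval) :
    orHom (canonicalHom hAC.1 hBD.1 h₁) (canonicalHom hAC.2 hBD.2 h₂) =
      canonicalHom hAC hBD (sup_le_sup h₁ h₂) := by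
  have key := (Iso.eq_comp_inv _).2 (orHom_ofBoolHom_comp_ofBoolOrIso h₁ h₂)
  simp only [canonicalHom]
  rw [normIso_or_hom, normIso_or_inv]
  simp only [orHom_comp, key, Category.assoc]
  exact (Category.assoc _ _ _).symm

lemma canonicalHom_and {A B C D : Frm} (hAC : NoLtr (A.and C)) (hBD : NoLtr (B.and D))
    (h₁ : A.eval ≤ B.eval) (h₂ : C.eval ≤ D.eval) :
    andHom (canonicalHom hAC.1 hBD.1 h₁) (canonicalHom hAC.2 hBD.2 h₂) =
      canonicalHom hAC hBD (inf_le_inf h₁ h₂) := by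
  have key := (Iso.eq_comp_inv _).2 (andHom_ofBoolHom_comp_ofBoolAndIso h₁ h₂)
  simp only [canonicalHom]
  rw [normIso_and_hom, normIso_and_inv]
  simp only [andHom_comp, key, Category.assoc]
  exact (Category.assoc _ _ _).symm

lemma canonicalHom_inv {A B : Frm} (e : A ≅ B) {hA : NoLtr A} {hB : NoLtr B}
    {h : A.eval ≤ B.eval} (he : e.hom = canonicalHom hA hB h) (h' : B.eval ≤ A.eval) :
    e.inv = canonicalHom hB hA h' :=
  Iso.inv_ext (by rw [he, canonicalHom_comp, canonicalHom_self])

lemma dOr_hom_eq_canonicalHom {A : Frm} (hA' : NoLtr (A.or Frm.bot)) (hA : NoLtr A)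
    (h : (A.or Frm.bot).eval ≤ A.eval) :
    (dOr A).hom = canonicalHom hA' hA h := by
  have step : ∀ a, (ofBoolOrIso a false).hom ≫ ofBoolHom (a || false) a (by simp) =
      (dOr _).hom := by
    rintro (_ | _) <;> exact Category.comp_id _
  rw [canonicalHom, ← Category.assoc, Iso.eq_comp_inv, normIso_or_hom, normIso_bot]
  dsimp only [Frm.eval]
  simp only [Iso.refl_hom, Category.assoc, step]
  exact (dOr_naturality _).symm

lemma sOr_hom_eq_canonicalHom {A : Frm} (hA' : NoLtr (Frm.bot.or A)) (hA : NoLtr A)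
    (h : (Frm.bot.or A).eval ≤ A.eval) :
    (sOr A).hom = canonicalHom hA' hA h := by
  have step : ∀ a, (ofBoolOrIso false a).hom ≫ ofBoolHom (false || a) a (by simp) =
      (sOr _).hom := by
    rintro (_ | _)
    · exact (Category.comp_id _).trans (congrArg Iso.hom dOr_bot)
    · exact Category.comp_id _
  rw [canonicalHom, ← Category.assoc, Iso.eq_comp_inv, normIso_or_hom, normIso_bot]
  dsimp only [Frm.eval]
  simp only [Iso.refl_hom, Category.assoc, step]
  exact (sOr_naturality _).symm

lemma dAnd_hom_eq_canonicalHom {A : Frm} (hA' : NoLtr (A.and Frm.top)) (hA : NoLtr A)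
    (h : (A.and Frm.top).eval ≤ A.eval) :
    (dAnd A).hom = canonicalHom hA' hA h := by
  have step : ∀ a, (ofBoolAndIso a true).hom ≫ ofBoolHom (a && true) a (by simp) =
      (dAnd _).hom := by
    rintro (_ | _) <;> exact Category.comp_id _
  rw [canonicalHom, ← Category.assoc, Iso.eq_comp_inv, normIso_and_hom, normIso_top]
  dsimp only [Frm.eval]
  simp only [Iso.refl_hom, Category.assoc, step]
  exact (dAnd_naturality _).symm

lemma sAnd_hom_eq_canonicalHom {A : Frm} (hA' : NoLtr (Frm.top.and A)) (hA : NoLtr A)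
    (h : (Frm.top.and A).eval ≤ A.eval) :
    (sAnd A).hom = canonicalHom hA' hA h := by
  have step : ∀ a, (ofBoolAndIso true a).hom ≫ ofBoolHom (true && a) a (by simp) =
      (sAnd _).hom := by
    rintro (_ | _)
    · exact Category.comp_id _
    · exact (Category.comp_id _).trans (congrArg Iso.hom dAnd_top)
  rw [canonicalHom, ← Category.assoc, Iso.eq_comp_inv, normIso_and_hom, normIso_top]
  dsimp only [Frm.eval]
  simp only [Iso.refl_hom, Category.assoc, step]
  exact (sAnd_naturality _).symm

lemma wOr_hom_eq_canonicalHom (hA : NoLtr (Frm.top.or Frm.top)) (hB : NoLtr Frm.top)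
    (h : (Frm.top.or Frm.top).eval ≤ Frm.top.eval) :
    wOr.hom = canonicalHom hA hB h := by
  dsimp only [canonicalHom, normIso, orIso, Iso.trans_hom, Iso.refl_hom, Iso.refl_inv, Frm.eval,
    Bool.or, ofBoolOrIso, ofBoolHom, Frm.ofBool]
  simp

lemma wAnd_hom_eq_canonicalHom (hA : NoLtr (Frm.bot.and Frm.bot)) (hB : NoLtr Frm.bot)
    (h : (Frm.bot.and Frm.bot).eval ≤ Frm.bot.eval) :
    wAnd.hom = canonicalHom hA hB h := by
  dsimp only [canonicalHom, normIso, andIso, Iso.trans_hom, Iso.refl_hom, Iso.refl_inv, Frm.eval,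
    Bool.and, ofBoolAndIso, ofBoolHom, Frm.ofBool]
  simp

lemma IsNGen.toHom_eq_canonicalHom {A B : Frm} {f : Tm A B} (hf : IsNGen f) (hA : NoLtr A)
    (hB : NoLtr B) (h : A.eval ≤ B.eval) : f.toHom = canonicalHom hA hB h := by
  cases hf with
  | dOrTo => exact dOr_hom_eq_canonicalHom hA hB h
  | dOrFrom => exact canonicalHom_inv _ (dOr_hom_eq_canonicalHom hB hA (by simp [Frm.eval])) h
  | sOrTo => exact sOr_hom_eq_canonicalHom hA hB h
  | sOrFrom => exact canonicalHom_inv _ (sOr_hom_eq_canonicalHom hB hA (by simp [Frm.eval])) h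
  | dAndTo => exact dAnd_hom_eq_canonicalHom hA hB h
  | dAndFrom => exact canonicalHom_inv _ (dAnd_hom_eq_canonicalHom hB hA (by simp [Frm.eval])) h
  | sAndTo => exact sAnd_hom_eq_canonicalHom hA hB h
  | sAndFrom => exact canonicalHom_inv _ (sAnd_hom_eq_canonicalHom hB hA (by simp [Frm.eval])) h
  | wOrTo => exact wOr_hom_eq_canonicalHom hA hB h
  | wOrFrom => exact canonicalHom_inv _ (wOr_hom_eq_canonicalHom hB hA le_rfl) h
  | wAndTo => exact wAnd_hom_eq_canonicalHom hA hB h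
  | wAndFrom => exact canonicalHom_inv _ (wAnd_hom_eq_canonicalHom hB hA le_rfl) h

lemma DSWK.eval_le {A B : Frm} {f : Tm A B} (hf : DSWK f) : A.eval ≤ B.eval := by
  induction hf with
  | id => exact le_rfl
  | gen hg => cases hg <;> simp [Frm.eval]
  | kappa => decide
  | comp _ _ ihg ihf => exact ihf.trans ihg
  | orM _ _ ihf ihg => exact sup_le_sup ihf ihg
  | andM _ _ ihf ihg => exact inf_le_inf ihf ihg

lemma DSWK.noLtr {A B : Frm} {f : Tm A B} (hf : DSWK f) (hA : NoLtr A) : NoLtr B := by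
  induction hf with
  | id => exact hA
  | gen hg => cases hg <;> simp_all [NoLtr]
  | kappa => trivial
  | comp _ _ ihg ihf => exact ihg (ihf hA)
  | orM _ _ ihf ihg => exact ⟨ihf hA.1, ihg hA.2⟩
  | andM _ _ ihf ihg => exact ⟨ihf hA.1, ihg hA.2⟩

theorem DSWK.toHom_eq_canonicalHom {A B : Frm} {f : Tm A B} (hf : DSWK f) (hA : NoLtr A)
    (hB : NoLtr B) : f.toHom = canonicalHom hA hB hf.eval_le := by
  induction hf with
  | id => exact (canonicalHom_self hA).symm
  | gen hg => exact hg.toHom_eq_canonicalHom hA hB _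
  | kappa => exact ((Category.id_comp _).trans (Category.comp_id _)).symm
  | comp _ hf ihg ihf =>
    rw [Tm.toHom_comp, ihf hA (hf.noLtr hA), ihg (hf.noLtr hA) hB, canonicalHom_comp]
  | orM _ _ ihf ihg => rw [Tm.toHom_orM, ihf hA.1 hB.1, ihg hA.2 hB.2, canonicalHom_or]
  | andM _ _ ihf ihg => rw [Tm.toHom_andM, ihf hA.1 hB.1, ihg hA.2 hB.2, canonicalHom_and]

def IsNHom {A B : Frm} (φ : A ⟶ B) : Prop := ∃ t : Tm A B, NTm t ∧ t.toHom = φ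

lemma IsNHom.comp {A B C : Frm} {φ : A ⟶ B} {ψ : B ⟶ C} (hφ : IsNHom φ) (hψ : IsNHom ψ) :
    IsNHom (φ ≫ ψ) := by
  obtain ⟨t, ht, rfl⟩ := hφ
  obtain ⟨u, hu, rfl⟩ := hψ
  exact ⟨u.comp t, hu.comp ht, rfl⟩

lemma isNHom_id (A : Frm) : IsNHom (𝟙 A) := ⟨_, NTm.id A, rfl⟩

lemma IsNHom.orHom {A B C D : Frm} {φ : A ⟶ B} {ψ : C ⟶ D} (hφ : IsNHom φ) (hψ : IsNHom ψ) :
    IsNHom (orHom φ ψ) := by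
  obtain ⟨t, ht, rfl⟩ := hφ
  obtain ⟨u, hu, rfl⟩ := hψ
  exact ⟨t.orM u, ht.orM hu, rfl⟩

lemma IsNHom.andHom {A B C D : Frm} {φ : A ⟶ B} {ψ : C ⟶ D} (hφ : IsNHom φ) (hψ : IsNHom ψ) :
    IsNHom (andHom φ ψ) := by
  obtain ⟨t, ht, rfl⟩ := hφ
  obtain ⟨u, hu, rfl⟩ := hψ
  exact ⟨t.andM u, ht.andM hu, rfl⟩

lemma ofBoolOrIso_isNHom (a b : Bool) :
    IsNHom (ofBoolOrIso a b).hom ∧ IsNHom (ofBoolOrIso a b).inv := by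
  cases a <;> cases b <;> exact ⟨⟨_, .gen (by constructor), rfl⟩, ⟨_, .gen (by constructor), rfl⟩⟩

lemma ofBoolAndIso_isNHom (a b : Bool) :
    IsNHom (ofBoolAndIso a b).hom ∧ IsNHom (ofBoolAndIso a b).inv := by
  cases a <;> cases b <;> exact ⟨⟨_, .gen (by constructor), rfl⟩, ⟨_, .gen (by constructor), rfl⟩⟩

lemma normIso_isNHom :
    ∀ (C : Frm) (h : NoLtr C), IsNHom (normIso C h).hom ∧ IsNHom (normIso C h).inv
  | Frm.pl _, h => h.elim
  | Frm.bot, _ => ⟨isNHom_id _, isNHom_id _⟩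
  | Frm.top, _ => ⟨isNHom_id _, isNHom_id _⟩
  | Frm.or A B, h =>
    have hA := normIso_isNHom A h.1
    have hB := normIso_isNHom B h.2
    ⟨(hA.1.orHom hB.1).comp (ofBoolOrIso_isNHom _ _).1,
      (ofBoolOrIso_isNHom _ _).2.comp (hA.2.orHom hB.2)⟩
  | Frm.and A B, h =>
    have hA := normIso_isNHom A h.1
    have hB := normIso_isNHom B h.2
    ⟨(hA.1.andHom hB.1).comp (ofBoolAndIso_isNHom _ _).1,
      (ofBoolAndIso_isNHom _ _).2.comp (hA.2.andHom hB.2)⟩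

lemma isNHom_or_eq_kappa_comp {A B : Frm} {a b : Bool} (h : a ≤ b) {φ : A ⟶ Frm.ofBool a}
    {ψ : Frm.ofBool b ⟶ B} (hφ : IsNHom φ) (hψ : IsNHom ψ) :
    IsNHom (φ ≫ ofBoolHom a b h ≫ ψ) ∨
      ∃ (t₁ : Tm A Frm.bot) (t₂ : Tm Frm.top B), NTm t₁ ∧ NTm t₂ ∧
        (t₂.comp (Tm.kappa.comp t₁)).toHom = φ ≫ ofBoolHom a b h ≫ ψ := by
  cases a <;> cases b
  · exact Or.inl (hφ.comp ((isNHom_id _).comp hψ))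
  · obtain ⟨t₁, ht₁, rfl⟩ := hφ
    obtain ⟨t₂, ht₂, rfl⟩ := hψ
    exact Or.inr ⟨t₁, t₂, ht₁, ht₂, Category.assoc t₁.toHom kappa t₂.toHom⟩
  · exact absurd h (by decide)
  · exact Or.inl (hφ.comp ((isNHom_id _).comp hψ))

/-- In 𝓜 , if no letter occurs in `A` and `B`, then every arrow term
`f : A → B` defined by δ, σ, w and κ is either equal to an N_{⊤,⊥}-term or
equal to `h'' ∘ κ ∘ h'` for N_{⊤,⊥}-terms `h'`, `h''`; consequently any two
such arrow terms `f, g : A → B` are equal in 𝓜 . -/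
theorem dswk_terms_between_letterless_objects {A B : Frm}
    (hA : NoLtr A) (hB : NoLtr B) :
    (∀ f : Tm A B, DSWK f →
      (∃ g : Tm A B, NTm g ∧ MEq f g) ∨
      (∃ (h₁ : Tm A Frm.bot) (h₂ : Tm Frm.top B), NTm h₁ ∧ NTm h₂ ∧
        MEq f (h₂.comp (Tm.kappa.comp h₁)))) ∧
    (∀ f g : Tm A B, DSWK f → DSWK g → MEq f g) := by
  refine ⟨fun f hf => ?_, fun f g hf hg => ?_⟩
  · have hfc := hf.toHom_eq_canonicalHom hA hB
    rcases isNHom_or_eq_kappa_comp hf.eval_le (normIso_isNHom A hA).1 (normIso_isNHom B hB).2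
      with ⟨g, hg, e⟩ | ⟨t₁, t₂, h₁, h₂, e⟩
    · exact Or.inl ⟨g, hg, Tm.toHom_eq_toHom_iff.1 (hfc.trans e.symm)⟩
    · exact Or.inr ⟨t₁, t₂, h₁, h₂, Tm.toHom_eq_toHom_iff.1 (hfc.trans e.symm)⟩
  · exact Tm.toHom_eq_toHom_iff.1
      ((hf.toHom_eq_canonicalHom hA hB).trans (hg.toHom_eq_canonicalHom hA hB).symm)

end SMI
end

section
/- In the free SMI category M, for every arrow f : A → B: if A is ⊥-pure then B is ⊥-pure, and if B is ⊤-pure then A is ⊤-pure. Consequently, if f : A → B and g : B → C are arrows with A and C pure, then B is pure. -/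
namespace SMI

/-- Normalized disjunction : `B∨⊥ ↦ B`, `⊥∨B ↦ B`, `⊤∨⊤ ↦ ⊤`. -/
def orN : Frm → Frm → Frm
  | Frm.bot, B => B
  | A, Frm.bot => A
  | Frm.top, Frm.top => Frm.top
  | A, B => A.or B

/-- Normalized conjunction : `B∧⊤ ↦ B`, `⊤∧B ↦ B`, `⊥∧⊥ ↦ ⊥`. -/
def andN : Frm → Frm → Frm
  | Frm.top, B => B
  | A, Frm.top => A
  | Frm.bot, Frm.bot => Frm.bot
  | A, B => A.and B

/-- The unit-normal form ν(A), obtained by iterated replacing of subformulas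
`B∨⊥`, `⊥∨B`, `B∧⊤`, `⊤∧B` by `B`, of `⊥∧⊥` by `⊥` and of `⊤∨⊤` by `⊤`. -/
def nu : Frm → Frm
  | Frm.or A B => orN (nu A) (nu B)
  | Frm.and A B => andN (nu A) (nu B)
  | A => A

/-- `⊥` occurs in the formula. -/
def hasBot : Frm → Prop
  | Frm.bot => True
  | Frm.pl _ => False
  | Frm.top => False
  | Frm.or A B => hasBot A ∨ hasBot B
  | Frm.and A B => hasBot A ∨ hasBot B

/-- `⊤` occurs in the formula. -/
def hasTop : Frm → Prop
  | Frm.top => True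
  | Frm.pl _ => False
  | Frm.bot => False
  | Frm.or A B => hasTop A ∨ hasTop B
  | Frm.and A B => hasTop A ∨ hasTop B

/-- `A` is ⊥-pure : there is no occurrence of `⊥` in ν(A). -/
def BotPure (A : Frm) : Prop := ¬ hasBot (nu A)

/-- `A` is ⊤-pure : there is no occurrence of `⊤` in ν(A). -/
def TopPure (A : Frm) : Prop := ¬ hasTop (nu A)

/-- `A` is pure : both ⊥-pure and ⊤-pure. -/
def Pure (A : Frm) : Prop := BotPure A ∧ TopPure A

end SMI

namespace SMI

/-! The shape of a formula in unit-normal form records whether it is `⊥`, `⊤`, or neither, and in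
the last case whether `⊥` and `⊤` occur in it. Shapes carry a disjunction and a conjunction making
the shape of `ν(A)` compositional in `A`, and an order (`⊥ ≤ ⊤` among the constants, the
`⊥`-flag reversed and the `⊤`-flag as is among the rest) along which every primitive arrow goes
up; apart from `κ` and `cᵏ` they even preserve the shape. Hence along any arrow an occurrence of
`⊥` in the normal form can only disappear and an occurrence of `⊤` only appear. -/

inductive Shape : Type
  | bot : Shape
  | top : Shape
  | other (hasBot hasTop : Bool) : Shape
  deriving DecidableEq, Fintype

namespace Shape

def hasBot : Shape → Bool
  | bot => true
  | top => false
  | other b _ => b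

def hasTop : Shape → Bool
  | bot => false
  | top => true
  | other _ t => t

def or : Shape → Shape → Shape
  | bot, y => y
  | x, bot => x
  | top, top => top
  | x, y => other (x.hasBot || y.hasBot) (x.hasTop || y.hasTop)

def and : Shape → Shape → Shape
  | top, y => y
  | x, top => x
  | bot, bot => bot
  | x, y => other (x.hasBot || y.hasBot) (x.hasTop || y.hasTop)

def Le : Shape → Shape → Prop
  | bot, bot | bot, top | top, top => True
  | other b t, other b' t' => b' ≤ b ∧ t ≤ t'
  | _, _ => False

instance : DecidableRel Le := fun x y => by
  cases x <;> cases y <;> unfold Le <;> infer_instance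

instance : PartialOrder Shape where
  le := Le
  le_refl := by decide
  le_trans := by decide
  le_antisymm := by decide

instance : DecidableLE Shape := inferInstanceAs (DecidableRel Le)

theorem hasBot_antitone : Antitone hasBot := by
  have : ∀ x y : Shape, x ≤ y → y.hasBot ≤ x.hasBot := by decide
  exact this

theorem hasTop_monotone : Monotone hasTop := by
  have : ∀ x y : Shape, x ≤ y → x.hasTop ≤ y.hasTop := by decide
  exact this

theorem or_mono {x y x' y' : Shape} (h : x ≤ y) (h' : x' ≤ y') : x.or x' ≤ y.or y' := by
  have : ∀ x y x' y' : Shape, x ≤ y → x' ≤ y' → x.or x' ≤ y.or y' := by decide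
  exact this x y x' y' h h'

theorem and_mono {x y x' y' : Shape} (h : x ≤ y) (h' : x' ≤ y') : x.and x' ≤ y.and y' := by
  have : ∀ x y x' y' : Shape, x ≤ y → x' ≤ y' → x.and x' ≤ y.and y' := by decide
  exact this x y x' y' h h'

theorem or_assoc (x y z : Shape) : x.or (y.or z) = (x.or y).or z := by
  revert x y z; decide

theorem and_assoc (x y z : Shape) : x.and (y.and z) = (x.and y).and z := by
  revert x y z; decide

theorem or_comm (x y : Shape) : x.or y = y.or x := by
  revert x y; decide

theorem and_comm (x y : Shape) : x.and y = y.and x := by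
  revert x y; decide

theorem or_bot (x : Shape) : x.or bot = x := by
  cases x <;> rfl

theorem bot_or (x : Shape) : bot.or x = x := rfl

theorem and_top (x : Shape) : x.and top = x := by
  cases x <;> rfl

theorem top_and (x : Shape) : top.and x = x := by
  cases x <;> rfl

theorem intermute_le (a b c d : Shape) : (a.and b).or (c.and d) ≤ (a.or c).and (b.or d) := by
  revert a b c d; decide

end Shape

def shape : Frm → Shape
  | .pl _ => .other false false
  | .bot => .bot
  | .top => .top
  | .or A B => (shape A).or (shape B)
  | .and A B => (shape A).and (shape B)

theorem Tm.shape_le {A B : Frm} (f : Tm A B) : shape A ≤ shape B := by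
  induction f with
  | id => exact le_rfl
  | comp _ _ ihg ihf => exact ihf.trans ihg
  | orM _ _ ihf ihg => exact Shape.or_mono ihf ihg
  | andM _ _ ihf ihg => exact Shape.and_mono ihf ihg
  | bOrTo => exact (Shape.or_assoc _ _ _).le
  | bOrFrom => exact (Shape.or_assoc _ _ _).ge
  | bAndTo => exact (Shape.and_assoc _ _ _).le
  | bAndFrom => exact (Shape.and_assoc _ _ _).ge
  | cOr => exact (Shape.or_comm _ _).le
  | cAnd => exact (Shape.and_comm _ _).le
  | dOrTo => exact (Shape.or_bot _).le
  | dOrFrom => exact (Shape.or_bot _).ge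
  | sOrTo => exact (Shape.bot_or _).le
  | sOrFrom => exact (Shape.bot_or _).ge
  | dAndTo => exact (Shape.and_top _).le
  | dAndFrom => exact (Shape.and_top _).ge
  | sAndTo => exact (Shape.top_and _).le
  | sAndFrom => exact (Shape.top_and _).ge
  | ck => exact Shape.intermute_le _ _ _ _
  | wAndTo | wAndFrom | wOrTo | wOrFrom | kappa => decide

def literalShape : Frm → Shape
  | .pl _ => .other false false
  | .bot => .bot
  | .top => .top
  | .or X Y | .and X Y =>
      .other ((literalShape X).hasBot || (literalShape Y).hasBot)
        ((literalShape X).hasTop || (literalShape Y).hasTop)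

theorem hasBot_literalShape (X : Frm) : (literalShape X).hasBot = true ↔ hasBot X := by
  induction X with
  | pl | bot | top => simp [literalShape, Shape.hasBot, hasBot]
  | or X Y ihX ihY | and X Y ihX ihY =>
    rw [literalShape, Shape.hasBot, Bool.or_eq_true, ihX, ihY, hasBot]

theorem hasTop_literalShape (X : Frm) : (literalShape X).hasTop = true ↔ hasTop X := by
  induction X with
  | pl | bot | top => simp [literalShape, Shape.hasTop, hasTop]
  | or X Y ihX ihY | and X Y ihX ihY =>
    rw [literalShape, Shape.hasTop, Bool.or_eq_true, ihX, ihY, hasTop]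

theorem literalShape_orN (X Y : Frm) :
    literalShape (orN X Y) = (literalShape X).or (literalShape Y) := by
  cases X <;> cases Y <;> rfl

theorem literalShape_andN (X Y : Frm) :
    literalShape (andN X Y) = (literalShape X).and (literalShape Y) := by
  cases X <;> cases Y <;> rfl

theorem shape_eq_literalShape_nu (A : Frm) : shape A = literalShape (nu A) := by
  induction A with
  | pl | bot | top => rfl
  | or A B ihA ihB => rw [shape, nu, literalShape_orN, ihA, ihB]
  | and A B ihA ihB => rw [shape, nu, literalShape_andN, ihA, ihB]

theorem botPure_iff_shape (A : Frm) : BotPure A ↔ (shape A).hasBot = false := by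
  rw [BotPure, shape_eq_literalShape_nu, ← hasBot_literalShape, Bool.not_eq_true]

theorem topPure_iff_shape (A : Frm) : TopPure A ↔ (shape A).hasTop = false := by
  rw [TopPure, shape_eq_literalShape_nu, ← hasTop_literalShape, Bool.not_eq_true]

theorem BotPure.map {A B : Frm} (f : Tm A B) (hA : BotPure A) : BotPure B := by
  rw [botPure_iff_shape] at hA ⊢
  exact Bool.eq_false_of_le_false (hA ▸ Shape.hasBot_antitone f.shape_le)

theorem TopPure.comap {A B : Frm} (f : Tm A B) (hB : TopPure B) : TopPure A := by
  rw [topPure_iff_shape] at hB ⊢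
  exact Bool.eq_false_of_le_false (hB ▸ Shape.hasTop_monotone f.shape_le)

/-- Lemma 3.5 and its corollary : for every arrow `f : A → B` of 𝓜 , if `A`
is ⊥-pure then `B` is ⊥-pure, and if `B` is ⊤-pure then `A` is ⊤-pure;
consequently, if `f : A → B` and `g : B → C` are arrows with `A` and `C`
pure, then `B` is pure. -/
theorem purity_along_arrows :
    (∀ {A B : Frm}, Tm A B → (BotPure A → BotPure B) ∧ (TopPure B → TopPure A)) ∧
    (∀ {A B C : Frm}, Tm A B → Tm B C → Pure A → Pure C → Pure B) :=
  ⟨fun f => ⟨.map f, .comap f⟩, fun f g hA hC => ⟨hA.1.map f, hC.2.comap g⟩⟩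

end SMI
end

section
/- In the strictified free SAI category A^st on form sets, if u : X → Y is an arrow and P is a set of letters such that for every subformset U∧V of X, let(U) ⊆ P iff let(V) ⊆ P, then the same equivalence holds for every subformset U∧V of Y. In particular, for any arrow u : X₁∨X₂ → Y and every subformset U∧V of Y, let(U) ⊆ let(X₁) iff let(V) ⊆ let(X₁). -/
namespace AST

/-- Formulas over an infinite set of letters with the connectives ∨ and ∧.
The objects of the strictified free SAI category 𝓐^st are the form
(multi)sets, i.e. the equivalence classes of formulas modulo the
associativity-commutativity equivalence `AC` below; we work with explicit
representatives. -/
inductive Frm2 : Type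
  | pl : ℕ → Frm2
  | or : Frm2 → Frm2 → Frm2
  | and : Frm2 → Frm2 → Frm2
  deriving DecidableEq

/-- Associativity-commutativity equivalence of formulas : two formulas are
related iff they denote the same form multiset. -/
inductive AC : Frm2 → Frm2 → Prop
  | refl (A : Frm2) : AC A A
  | symm {A B : Frm2} : AC A B → AC B A
  | trans {A B C : Frm2} : AC A B → AC B C → AC A C
  | orCongr {A A' B B' : Frm2} : AC A A' → AC B B' → AC (A.or B) (A'.or B')
  | andCongr {A A' B B' : Frm2} : AC A A' → AC B B' → AC (A.and B) (A'.and B')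
  | orAssoc (A B C : Frm2) : AC (A.or (B.or C)) ((A.or B).or C)
  | andAssoc (A B C : Frm2) : AC (A.and (B.and C)) ((A.and B).and C)
  | orComm (A B : Frm2) : AC (A.or B) (B.or A)
  | andComm (A B : Frm2) : AC (A.and B) (B.and A)

/-- Arrow terms of 𝓐^st : generated from strict identities (`str h`, the
identity of the form multiset presented by both endpoints) and the
intermutation arrows cᵏ by composition, ∨ and ∧. -/
inductive ST : Frm2 → Frm2 → Type
  | str {A B : Frm2} : AC A B → ST A B
  | comp {A B C : Frm2} : ST B C → ST A B → ST A C
  | orM {A B C D : Frm2} : ST A B → ST C D → ST (A.or C) (B.or D)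
  | andM {A B C D : Frm2} : ST A B → ST C D → ST (A.and C) (B.and D)
  | ck (S T U V : Frm2) : ST ((S.and T).or (U.and V)) ((S.or U).and (T.or V))

/-- The identity arrow term. -/
def ST.idT (A : Frm2) : ST A A := ST.str (AC.refl A)

/-- Equality of arrows of 𝓐^st : the smallest congruence making `str`
arrows behave as (strict) identities, making ∨ and ∧ biendofunctors and cᵏ
natural, identifying `cᵏ_{[S,T,U,V]}`, `cᵏ_{[T,S,V,U]}`, `cᵏ_{[U,V,S,T]}`,
and containing the strict internal (1s) and external (2s) associativity
equations. -/
inductive SEq : ∀ {A B : Frm2}, ST A B → ST A B → Prop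
  | refl {A B : Frm2} (f : ST A B) : SEq f f
  | symm {A B : Frm2} {f g : ST A B} : SEq f g → SEq g f
  | trans {A B : Frm2} {f g h : ST A B} : SEq f g → SEq g h → SEq f h
  | comp_congr {A B C : Frm2} {g g' : ST B C} {f f' : ST A B} :
      SEq g g' → SEq f f' → SEq (g.comp f) (g'.comp f')
  | or_congr {A B C D : Frm2} {f f' : ST A B} {g g' : ST C D} :
      SEq f f' → SEq g g' → SEq (f.orM g) (f'.orM g')
  | and_congr {A B C D : Frm2} {f f' : ST A B} {g g' : ST C D} :
      SEq f f' → SEq g g' → SEq (f.andM g) (f'.andM g')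
  | id_comp {A B : Frm2} (f : ST A B) : SEq ((ST.idT B).comp f) f
  | comp_id {A B : Frm2} (f : ST A B) : SEq (f.comp (ST.idT A)) f
  | comp_assoc {A B C D : Frm2} (h : ST C D) (g : ST B C) (f : ST A B) :
      SEq ((h.comp g).comp f) (h.comp (g.comp f))
  | or_comp {A B C A' B' C' : Frm2} (g : ST B C) (f : ST A B) (g' : ST B' C') (f' : ST A' B') :
      SEq ((g.comp f).orM (g'.comp f')) ((g.orM g').comp (f.orM f'))
  | and_comp {A B C A' B' C' : Frm2} (g : ST B C) (f : ST A B) (g' : ST B' C') (f' : ST A' B') :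
      SEq ((g.comp f).andM (g'.comp f')) ((g.andM g').comp (f.andM f'))
  -- str arrows are strict identities between presentations of the same
  -- form multiset
  | str_comp {A B C : Frm2} (h₁ : AC A B) (h₂ : AC B C) :
      SEq ((ST.str h₂).comp (ST.str h₁)) (ST.str (h₁.trans h₂))
  | str_or {A A' B B' : Frm2} (h : AC A A') (h' : AC B B') :
      SEq ((ST.str h).orM (ST.str h')) (ST.str (h.orCongr h'))
  | str_and {A A' B B' : Frm2} (h : AC A A') (h' : AC B B') :
      SEq ((ST.str h).andM (ST.str h')) (ST.str (h.andCongr h'))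
  -- naturality of cᵏ
  | ck_nat {S S' T T' U U' V V' : Frm2}
      (f : ST S S') (g : ST T T') (h : ST U U') (k : ST V V') :
      SEq ((ST.ck S' T' U' V').comp ((f.andM g).orM (h.andM k)))
          (((f.orM h).andM (g.orM k)).comp (ST.ck S T U V))
  -- cᵏ_{[S,T,U,V]} = cᵏ_{[U,V,S,T]} : the two disjuncts of the source may
  -- be interchanged
  | ck_swap (S T U V : Frm2)
      (h₁ : AC ((S.and T).or (U.and V)) ((U.and V).or (S.and T)))
      (h₂ : AC ((U.or S).and (V.or T)) ((S.or U).and (T.or V))) :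
      SEq ((ST.str h₂).comp ((ST.ck U V S T).comp (ST.str h₁))) (ST.ck S T U V)
  -- cᵏ_{[S,T,U,V]} = cᵏ_{[T,S,V,U]} : the two conjuncts inside each
  -- disjunct of the source may be interchanged
  | ck_swap' (S T U V : Frm2)
      (h₁ : AC ((S.and T).or (U.and V)) ((T.and S).or (V.and U)))
      (h₂ : AC ((T.or V).and (S.or U)) ((S.or U).and (T.or V))) :
      SEq ((ST.str h₂).comp ((ST.ck T S V U).comp (ST.str h₁))) (ST.ck S T U V)
  -- the strict internal associativity condition (1s)
  | int_assoc (U V W X Y Z : Frm2)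
      (h₁ : AC ((U.and (V.and W)).or (X.and (Y.and Z)))
               (((U.and V).and W).or ((X.and Y).and Z)))
      (h₂ : AC (((U.or X).and (V.or Y)).and (W.or Z))
               ((U.or X).and ((V.or Y).and (W.or Z)))) :
      SEq (((ST.idT (U.or X)).andM (ST.ck V W Y Z)).comp (ST.ck U (V.and W) X (Y.and Z)))
          ((ST.str h₂).comp
            (((ST.ck U V X Y).andM (ST.idT (W.or Z))).comp
              ((ST.ck (U.and V) W (X.and Y) Z).comp (ST.str h₁))))
  -- the strict external associativity condition (2s)
  | ext_assoc (U V W X Y Z : Frm2)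
      (h₁ : AC ((U.and X).or ((V.and Y).or (W.and Z)))
               (((U.and X).or (V.and Y)).or (W.and Z)))
      (h₂ : AC (((U.or V).or W).and ((X.or Y).or Z))
               ((U.or (V.or W)).and (X.or (Y.or Z)))) :
      SEq ((ST.ck U X (V.or W) (Y.or Z)).comp ((ST.idT (U.and X)).orM (ST.ck V Y W Z)))
          ((ST.str h₂).comp
            (((ST.ck (U.or V) (X.or Y) W Z).comp
              ((ST.ck U X V Y).orM (ST.idT (W.and Z)))).comp (ST.str h₁)))

/-- The set of letters occurring in a formula. -/
def ltr : Frm2 → Finset ℕ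
  | Frm2.pl n => {n}
  | Frm2.or A B => ltr A ∪ ltr B
  | Frm2.and A B => ltr A ∪ ltr B

/-- Number of occurrences of the letter `n` in a formula. -/
def cnt2 (n : ℕ) : Frm2 → ℕ
  | Frm2.pl m => if m = n then 1 else 0
  | Frm2.or A B => cnt2 n A + cnt2 n B
  | Frm2.and A B => cnt2 n A + cnt2 n B

/-- A formula is diversified (presents a form set) when every letter occurs
in it at most once. -/
def Div2 (A : Frm2) : Prop := ∀ n : ℕ, cnt2 n A ≤ 1

/-- Subformula relation on formulas. -/
inductive Subf : Frm2 → Frm2 → Prop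
  | refl (A : Frm2) : Subf A A
  | orl {S A B : Frm2} : Subf S A → Subf S (A.or B)
  | orr {S A B : Frm2} : Subf S B → Subf S (A.or B)
  | andl {S A B : Frm2} : Subf S A → Subf S (A.and B)
  | andr {S A B : Frm2} : Subf S B → Subf S (A.and B)

/-- `S` is a subformset of `X` : some formula AC-equivalent to `S` is a
subformula of some formula AC-equivalent to `X`. -/
def SubFS (S X : Frm2) : Prop := ∃ X' S' : Frm2, AC X X' ∧ Subf S' X' ∧ AC S' S

end AST

namespace AST

/-! Call a formula `P`-respecting when each of its conjunctions `A ∧ B` has `let(A) ⊆ P` iff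
`let(B) ⊆ P`. This property is invariant under AC and inherited by subformulas, so it is
exactly the hypothesis of the theorem. Every generating arrow preserves letters, and `cᵏ`
preserves the property: if `S, T` and `U, V` agree on lying in `P`, then so do `S ∨ U` and
`T ∨ V`. For `X₁ ∨ X₂` diversified and `P = let(X₁)`, every conjunction lies within `X₁`, where
both sides are in `P`, or within `X₂`, where neither is. -/

theorem AC.ltr_eq {A B : Frm2} (h : AC A B) : ltr A = ltr B := by
  induction h with
  | refl => rfl
  | symm _ ih => exact ih.symm
  | trans _ _ ih₁ ih₂ => exact ih₁.trans ih₂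
  | orCongr _ _ ih₁ ih₂ | andCongr _ _ ih₁ ih₂ => simp only [ltr, ih₁, ih₂]
  | orAssoc | andAssoc => simp only [ltr, Finset.union_assoc]
  | orComm | andComm => simp only [ltr, Finset.union_comm]

theorem ST.ltr_eq {A B : Frm2} (u : ST A B) : ltr A = ltr B := by
  induction u with
  | str h => exact h.ltr_eq
  | comp _ _ ih₁ ih₂ => exact ih₂.trans ih₁
  | orM _ _ ih₁ ih₂ | andM _ _ ih₁ ih₂ => simp only [ltr, ih₁, ih₂]
  | ck => simp only [ltr, Finset.union_assoc, Finset.union_left_comm]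

theorem ltr_nonempty (A : Frm2) : (ltr A).Nonempty := by
  induction A with
  | pl n => exact Finset.singleton_nonempty n
  | or _ _ ih _ | and _ _ ih _ => exact ih.mono Finset.subset_union_left

theorem cnt2_pos_of_mem_ltr {n : ℕ} {A : Frm2} (h : n ∈ ltr A) : 0 < cnt2 n A := by
  induction A with
  | pl m => simp_all [ltr, cnt2]
  | or _ _ ihA ihB | and _ _ ihA ihB =>
    rcases Finset.mem_union.1 h with h | h
    · exact Nat.add_pos_left (ihA h) _
    · exact Nat.add_pos_right _ (ihB h)

theorem disjoint_ltr_of_div2_or {A B : Frm2} (h : Div2 (A.or B)) : Disjoint (ltr A) (ltr B) := by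
  refine Finset.disjoint_left.2 fun n hA hB => ?_
  have := h n
  have := cnt2_pos_of_mem_ltr hA
  have := cnt2_pos_of_mem_ltr hB
  simp only [cnt2] at *
  omega

def Respects (P : Set ℕ) : Frm2 → Prop
  | Frm2.pl _ => True
  | Frm2.or A B => Respects P A ∧ Respects P B
  | Frm2.and A B => Respects P A ∧ Respects P B ∧
      ((↑(ltr A) : Set ℕ) ⊆ P ↔ (↑(ltr B) : Set ℕ) ⊆ P)

section

variable {P : Set ℕ}

theorem AC.respects_iff {A B : Frm2} (h : AC A B) : Respects P A ↔ Respects P B := by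
  induction h with
  | refl => exact Iff.rfl
  | symm _ ih => exact ih.symm
  | trans _ _ ih₁ ih₂ => exact ih₁.trans ih₂
  | orCongr _ _ ih₁ ih₂ => simp only [Respects, ih₁, ih₂]
  | andCongr h₁ h₂ ih₁ ih₂ => simp only [Respects, ih₁, ih₂, h₁.ltr_eq, h₂.ltr_eq]
  | orAssoc | orComm | andComm => simp only [Respects]; tauto
  | andAssoc =>
    simp only [Respects, ltr, Finset.coe_union, Set.union_subset_iff]
    tauto

theorem Respects.of_subf {S A : Frm2} (hA : Respects P A) (h : Subf S A) : Respects P S := by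
  induction h with
  | refl => exact hA
  | orl _ ih | andl _ ih => exact ih hA.1
  | orr _ ih => exact ih hA.2
  | andr _ ih => exact ih hA.2.1

theorem Respects.iff_of_subFS {U V X : Frm2} (hX : Respects P X) (h : SubFS (U.and V) X) :
    (↑(ltr U) : Set ℕ) ⊆ P ↔ (↑(ltr V) : Set ℕ) ⊆ P := by
  obtain ⟨X', S, hXX', hSX', hS⟩ := h
  exact (hS.respects_iff.1 ((hXX'.respects_iff.1 hX).of_subf hSX')).2.2

theorem respects_of_forall_subf {X : Frm2}
    (h : ∀ U V : Frm2, Subf (U.and V) X → ((↑(ltr U) : Set ℕ) ⊆ P ↔ (↑(ltr V) : Set ℕ) ⊆ P)) :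
    Respects P X := by
  induction X with
  | pl => trivial
  | or A B ihA ihB =>
    exact ⟨ihA fun U V hs => h U V hs.orl, ihB fun U V hs => h U V hs.orr⟩
  | and A B ihA ihB =>
    exact ⟨ihA fun U V hs => h U V hs.andl, ihB fun U V hs => h U V hs.andr,
      h A B (Subf.refl _)⟩

theorem respects_iff_forall_subFS {X : Frm2} :
    Respects P X ↔
      ∀ U V : Frm2, SubFS (U.and V) X → ((↑(ltr U) : Set ℕ) ⊆ P ↔ (↑(ltr V) : Set ℕ) ⊆ P) :=
  ⟨fun hX _ _ => hX.iff_of_subFS, fun h =>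
    respects_of_forall_subf fun U V hs => h U V ⟨X, _, AC.refl X, hs, AC.refl _⟩⟩

theorem Respects.map {A B : Frm2} (u : ST A B) (hA : Respects P A) : Respects P B := by
  induction u with
  | str h => exact h.respects_iff.1 hA
  | comp _ _ ih₁ ih₂ => exact ih₁ (ih₂ hA)
  | orM _ _ ih₁ ih₂ => exact ⟨ih₁ hA.1, ih₂ hA.2⟩
  | andM f g ih₁ ih₂ => exact ⟨ih₁ hA.1, ih₂ hA.2.1, f.ltr_eq ▸ g.ltr_eq ▸ hA.2.2⟩
  | ck =>
    obtain ⟨⟨hS, hT, hST⟩, hU, hV, hUV⟩ := hA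
    refine ⟨⟨hS, hU⟩, ⟨hT, hV⟩, ?_⟩
    simp only [ltr, Finset.coe_union, Set.union_subset_iff]
    tauto

theorem respects_of_subset {A : Frm2} (h : (↑(ltr A) : Set ℕ) ⊆ P) : Respects P A := by
  induction A with
  | pl => trivial
  | or A B ihA ihB =>
    simp only [ltr, Finset.coe_union, Set.union_subset_iff] at h
    exact ⟨ihA h.1, ihB h.2⟩
  | and A B ihA ihB =>
    simp only [ltr, Finset.coe_union, Set.union_subset_iff] at h
    exact ⟨ihA h.1, ihB h.2, iff_of_true h.1 h.2⟩

theorem respects_of_disjoint {A : Frm2} (h : Disjoint (↑(ltr A) : Set ℕ) P) : Respects P A := by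
  have not_subset {B : Frm2} (hB : Disjoint (↑(ltr B) : Set ℕ) P) : ¬(↑(ltr B) : Set ℕ) ⊆ P :=
    fun hsub =>
      let ⟨n, hn⟩ := ltr_nonempty B
      Set.disjoint_left.1 hB hn (hsub hn)
  induction A with
  | pl => trivial
  | or A B ihA ihB =>
    simp only [ltr, Finset.coe_union, Set.disjoint_union_left] at h
    exact ⟨ihA h.1, ihB h.2⟩
  | and A B ihA ihB =>
    simp only [ltr, Finset.coe_union, Set.disjoint_union_left] at h
    exact ⟨ihA h.1, ihB h.2, iff_of_false (not_subset h.1) (not_subset h.2)⟩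

end

/-- Lemma 5.1 and Lemma 5.2 : if `u : X → Y` is an arrow of 𝓐^st between
form sets and `P` is a set of letters such that for every subformset `U∧V`
of `X` we have `let(U) ⊆ P` iff `let(V) ⊆ P`, then the same equivalence
holds for every subformset `U∧V` of `Y`; in particular, for any arrow
`u : X₁∨X₂ → Y` and every subformset `U∧V` of `Y`,
`let(U) ⊆ let(X₁)` iff `let(V) ⊆ let(X₁)`. -/
theorem conjunctions_respect_letter_partitions :
    (∀ {X Y : Frm2} (_ : ST X Y) (P : Set ℕ), Div2 X → Div2 Y →
      (∀ U V : Frm2, SubFS (U.and V) X → ((↑(ltr U) : Set ℕ) ⊆ P ↔ (↑(ltr V) : Set ℕ) ⊆ P)) →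
      (∀ U V : Frm2, SubFS (U.and V) Y → ((↑(ltr U) : Set ℕ) ⊆ P ↔ (↑(ltr V) : Set ℕ) ⊆ P))) ∧
    (∀ {X₁ X₂ Y : Frm2} (_ : ST (X₁.or X₂) Y), Div2 (X₁.or X₂) → Div2 Y →
      ∀ U V : Frm2, SubFS (U.and V) Y → (ltr U ⊆ ltr X₁ ↔ ltr V ⊆ ltr X₁)) := by
  refine ⟨fun u P _ _ hX =>
    respects_iff_forall_subFS.1 (.map u (respects_iff_forall_subFS.2 hX)), ?_⟩
  intro X₁ X₂ Y u hdiv _ U V hs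
  have hX : Respects (↑(ltr X₁) : Set ℕ) (X₁.or X₂) :=
    ⟨respects_of_subset subset_rfl,
      respects_of_disjoint (Finset.disjoint_coe.2 (disjoint_ltr_of_div2_or hdiv).symm)⟩
  simpa only [Finset.coe_subset] using (hX.map u).iff_of_subFS hs

end AST
end

section
/- In A^st, if u : X₁∨X₂ → Y is (X₁,X₂)-splitting, then Y with all letters of X₁ deleted equals X₂, and Y with all letters of X₂ deleted equals X₁; moreover if the target Y is a conjunction Y₁∧Y₂, then the main connective of both X₁ and X₂ is ∧. -/
namespace AST

/-- `AllCk Q u` holds when every occurrence of cᵏ in the arrow term `u`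
satisfies the predicate `Q` on its four indices. -/
def AllCk (Q : Frm2 → Frm2 → Frm2 → Frm2 → Prop) : ∀ {A B : Frm2}, ST A B → Prop
  | _, _, ST.str _ => True
  | _, _, ST.comp g f => AllCk Q g ∧ AllCk Q f
  | _, _, ST.orM f g => AllCk Q f ∧ AllCk Q g
  | _, _, ST.andM f g => AllCk Q f ∧ AllCk Q g
  | _, _, ST.ck S T U V => Q S T U V

/-- An occurrence `cᵏ_{[S,T,U,V]}` is (X₁,X₂)-splitting when one of
`let(S∧T)`, `let(U∧V)` is included in `let(X₁)` and the other in `let(X₂)`. -/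
def SplitC (X₁ X₂ : Frm2) (S T U V : Frm2) : Prop :=
  (ltr S ∪ ltr T ⊆ ltr X₁ ∧ ltr U ∪ ltr V ⊆ ltr X₂) ∨
  (ltr S ∪ ltr T ⊆ ltr X₂ ∧ ltr U ∪ ltr V ⊆ ltr X₁)

/-- An arrow term is (X₁,X₂)-splitting when every occurrence of cᵏ in it is
(X₁,X₂)-splitting. -/
def Splitting (X₁ X₂ : Frm2) {A B : Frm2} (u : ST A B) : Prop :=
  AllCk (SplitC X₁ X₂) u

/-- An arrow term is (X₁,X₂)-nonsplitting when no occurrence of cᵏ in it is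
(X₁,X₂)-splitting. -/
def NonSplitting (X₁ X₂ : Frm2) {A B : Frm2} (u : ST A B) : Prop :=
  AllCk (fun S T U V => ¬ SplitC X₁ X₂ S T U V) u

/-- Deletion of the letters in `P` from a formula (`none` when all letters
are deleted) : `Y^{-P}`. -/
def delF (P : Finset ℕ) : Frm2 → Option Frm2
  | Frm2.pl n => if n ∈ P then none else some (Frm2.pl n)
  | Frm2.or A B =>
      match delF P A, delF P B with
      | some a, some b => some (a.or b)
      | some a, none => some a
      | none, some b => some b
      | none, none => none
  | Frm2.and A B =>
      match delF P A, delF P B with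
      | some a, some b => some (a.and b)
      | some a, none => some a
      | none, some b => some b
      | none, none => none

end AST

/-!
Deleting the letters of `P` from both ends of an arrow term gives AC-equivalent results (or
nothing at both ends) as soon as every cᵏ in the term is `P`-separated, i.e. one disjunct of its
source consists of letters of `P` and the other avoids `P`: the AC-moves commute with deletion,
and a `P`-separated cᵏ becomes an identity once `P` is deleted. A splitting term is separated
both by `let(X₁)` and by `let(X₂)`, and deleting `let(X₁)` from `X₁ ∨ X₂` leaves `X₂`.

If moreover the target is a conjunction, the term contains a cᵏ taking a disjunction to a
conjunction; deleting `P` from its source leaves one of its two conjunctive disjuncts, and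
transporting this back to `X₁ ∨ X₂` shows that `X₂` is a conjunction.
-/

namespace Option

variable {α β : Type*}

theorem rel_some_left {r : α → β → Prop} {a : α} {y : Option β} :
    Option.Rel r (some a) y ↔ ∃ b, y = some b ∧ r a b := by
  cases y <;> simp

theorem rel_some_right {r : α → β → Prop} {x : Option α} {b : β} :
    Option.Rel r x (some b) ↔ ∃ a, x = some a ∧ r a b := by
  cases x <;> simp

variable {r : α → α → Prop}

theorem rel_equivalence (hr : Equivalence r) : Equivalence (Option.Rel r) where
  refl
    | none => .none
    | some a => .some (hr.refl a)
  symm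
    | .none => .none
    | .some h => .some (hr.symm h)
  trans
    | .none, .none => .none
    | .some h₁, .some h₂ => .some (hr.trans h₁ h₂)

theorem Rel.merge {f g : α → α → α} (hfg : ∀ {a a' b b'}, r a a' → r b b' → r (f a b) (g a' b'))
    {x x' y y' : Option α} (hx : Option.Rel r x x') (hy : Option.Rel r y y') :
    Option.Rel r (x.merge f y) (x'.merge g y') := by
  cases hx <;> cases hy
  exacts [.some (hfg ‹_› ‹_›), .some ‹_›, .some ‹_›, .none]

theorem rel_merge_assoc (hr : Equivalence r) {f : α → α → α}
    (hf : ∀ a b c, r (f a (f b c)) (f (f a b) c)) (x y z : Option α) :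
    Option.Rel r (x.merge f (y.merge f z)) ((x.merge f y).merge f z) := by
  cases x <;> cases y <;> cases z
  all_goals first
    | exact (rel_equivalence hr).refl _
    | exact .some (hf _ _ _)

theorem rel_merge_comm (hr : Equivalence r) {f : α → α → α} (hf : ∀ a b, r (f a b) (f b a))
    (x y : Option α) : Option.Rel r (x.merge f y) (y.merge f x) := by
  cases x <;> cases y
  all_goals first
    | exact (rel_equivalence hr).refl _
    | exact .some (hf _ _)

end Option

namespace AST

theorem AC.equivalence : Equivalence AC := ⟨AC.refl, AC.symm, AC.trans⟩

theorem AC.option_rel_equivalence : Equivalence (Option.Rel AC) :=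
  Option.rel_equivalence AC.equivalence

def Frm2.IsOr (A : Frm2) : Prop := ∃ B C : Frm2, A = B.or C

def Frm2.IsAnd (A : Frm2) : Prop := ∃ B C : Frm2, A = B.and C

theorem AC.isAnd_iff {A B : Frm2} (h : AC A B) : A.IsAnd ↔ B.IsAnd := by
  induction h <;> simp_all [Frm2.IsAnd]

def Frm2.size : Frm2 → ℕ
  | .pl _ => 1
  | .or A B => A.size + B.size
  | .and A B => A.size + B.size

theorem Frm2.one_le_size (A : Frm2) : 1 ≤ A.size := by
  induction A <;> simp only [size] <;> omega

theorem AC.size_eq {A B : Frm2} (h : AC A B) : A.size = B.size := by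
  induction h <;> grind [Frm2.size]

theorem ST.size_eq {A B : Frm2} (u : ST A B) : A.size = B.size := by
  induction u with
  | str h => exact h.size_eq
  | comp _ _ ihg ihf => exact ihf.trans ihg
  | orM _ _ ihf ihg | andM _ _ ihf ihg => simp only [Frm2.size, ihf, ihg]
  | ck S T U V => simp only [Frm2.size]; omega

theorem ST.not_isOr_of_pl {A : Frm2} {n : ℕ} (u : ST A (.pl n)) : ¬ A.IsOr := by
  rintro ⟨B, C, rfl⟩
  have := u.size_eq
  have := B.one_le_size
  have := C.one_le_size
  simp only [Frm2.size] at *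
  omega

theorem one_le_cnt2_of_mem_ltr {n : ℕ} {A : Frm2} (h : n ∈ ltr A) : 1 ≤ cnt2 n A := by
  induction A with
  | pl m => simp_all [ltr, cnt2]
  | or A B ihA ihB | and A B ihA ihB =>
    rw [ltr, Finset.mem_union] at h
    rcases h with h | h
    · exact (ihA h).trans (by simp only [cnt2]; omega)
    · exact (ihB h).trans (by simp only [cnt2]; omega)

theorem Div2.disjoint_ltr {X₁ X₂ : Frm2} (hX : Div2 (X₁.or X₂)) :
    Disjoint (ltr X₁) (ltr X₂) := by
  rw [Finset.disjoint_left]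
  intro n h₁ h₂
  have := hX n
  have := one_le_cnt2_of_mem_ltr h₁
  have := one_le_cnt2_of_mem_ltr h₂
  simp only [cnt2] at *
  omega

section Deletion

variable {P : Finset ℕ}

theorem delF_or (A B : Frm2) : delF P (A.or B) = (delF P A).merge .or (delF P B) := by
  rw [delF]
  cases delF P A <;> cases delF P B <;> rfl

theorem delF_and (A B : Frm2) : delF P (A.and B) = (delF P A).merge .and (delF P B) := by
  rw [delF]
  cases delF P A <;> cases delF P B <;> rfl

theorem delF_eq_none {A : Frm2} (h : ltr A ⊆ P) : delF P A = none := by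
  induction A with
  | pl n => simp_all [ltr, delF]
  | or A B ihA ihB =>
    rw [ltr, Finset.union_subset_iff] at h
    rw [delF_or, ihA h.1, ihB h.2]; rfl
  | and A B ihA ihB =>
    rw [ltr, Finset.union_subset_iff] at h
    rw [delF_and, ihA h.1, ihB h.2]; rfl

theorem delF_eq_self {A : Frm2} (h : Disjoint P (ltr A)) : delF P A = some A := by
  induction A with
  | pl n => simp_all [ltr, delF]
  | or A B ihA ihB =>
    rw [ltr, Finset.disjoint_union_right] at h
    rw [delF_or, ihA h.1, ihB h.2]; rfl
  | and A B ihA ihB =>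
    rw [ltr, Finset.disjoint_union_right] at h
    rw [delF_and, ihA h.1, ihB h.2]; rfl

theorem AC.rel_delF {A B : Frm2} (h : AC A B) : Option.Rel AC (delF P A) (delF P B) := by
  induction h with
  | refl => exact AC.option_rel_equivalence.refl _
  | symm _ ih => exact AC.option_rel_equivalence.symm ih
  | trans _ _ ih₁ ih₂ => exact AC.option_rel_equivalence.trans ih₁ ih₂
  | orCongr _ _ ih₁ ih₂ => rw [delF_or, delF_or]; exact ih₁.merge AC.orCongr ih₂
  | andCongr _ _ ih₁ ih₂ => rw [delF_and, delF_and]; exact ih₁.merge AC.andCongr ih₂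
  | orAssoc =>
    simp only [delF_or]; exact Option.rel_merge_assoc AC.equivalence AC.orAssoc _ _ _
  | andAssoc =>
    simp only [delF_and]; exact Option.rel_merge_assoc AC.equivalence AC.andAssoc _ _ _
  | orComm => simp only [delF_or]; exact Option.rel_merge_comm AC.equivalence AC.orComm _ _
  | andComm => simp only [delF_and]; exact Option.rel_merge_comm AC.equivalence AC.andComm _ _

def Separated (P : Finset ℕ) (S T U V : Frm2) : Prop :=
  (ltr S ∪ ltr T ⊆ P ∧ Disjoint P (ltr U ∪ ltr V)) ∨
  (Disjoint P (ltr S ∪ ltr T) ∧ ltr U ∪ ltr V ⊆ P)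

variable {S T U V : Frm2}

theorem Separated.delF_source (h : Separated P S T U V) :
    delF P ((S.and T).or (U.and V)) = some (U.and V) ∨
      delF P ((S.and T).or (U.and V)) = some (S.and T) := by
  simp only [Separated, Finset.union_subset_iff, Finset.disjoint_union_right] at h
  rcases h with ⟨⟨hS, hT⟩, hU, hV⟩ | ⟨⟨hS, hT⟩, hU, hV⟩
  · left
    rw [delF_or, delF_and, delF_and, delF_eq_none hS, delF_eq_none hT, delF_eq_self hU,
      delF_eq_self hV]
    rfl
  · right
    rw [delF_or, delF_and, delF_and, delF_eq_self hS, delF_eq_self hT, delF_eq_none hU,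
      delF_eq_none hV]
    rfl

theorem Separated.delF_source_eq_target (h : Separated P S T U V) :
    delF P ((S.and T).or (U.and V)) = delF P ((S.or U).and (T.or V)) := by
  simp only [Separated, Finset.union_subset_iff, Finset.disjoint_union_right] at h
  rcases h with ⟨⟨hS, hT⟩, hU, hV⟩ | ⟨⟨hS, hT⟩, hU, hV⟩ <;>
    simp only [delF_or, delF_and, delF_eq_none, delF_eq_self, *, Option.merge]

theorem AllCk.mono {Q Q' : Frm2 → Frm2 → Frm2 → Frm2 → Prop}
    (hQ : ∀ {S T U V}, Q S T U V → Q' S T U V) {A B : Frm2} {u : ST A B} (hu : AllCk Q u) :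
    AllCk Q' u := by
  induction u with
  | str => trivial
  | comp _ _ ihg ihf | orM _ _ ihg ihf | andM _ _ ihg ihf => exact ⟨ihg hu.1, ihf hu.2⟩
  | ck => exact hQ hu

theorem ST.rel_delF {A B : Frm2} (u : ST A B) (hu : AllCk (Separated P) u) :
    Option.Rel AC (delF P A) (delF P B) := by
  induction u with
  | str h => exact h.rel_delF
  | comp _ _ ihg ihf => exact AC.option_rel_equivalence.trans (ihf hu.2) (ihg hu.1)
  | orM _ _ ihf ihg =>
    rw [delF_or, delF_or]; exact (ihf hu.1).merge AC.orCongr (ihg hu.2)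
  | andM _ _ ihf ihg =>
    rw [delF_and, delF_and]; exact (ihf hu.1).merge AC.andCongr (ihg hu.2)
  | ck => rw [Separated.delF_source_eq_target hu]; exact AC.option_rel_equivalence.refl _

theorem ST.isAnd_delF_source {A B : Frm2} (u : ST A B) (hu : AllCk (Separated P) u)
    (hA : A.IsOr) (hB : B.IsAnd) : ∃ Z, delF P A = some Z ∧ Z.IsAnd := by
  induction u with
  | str h =>
    obtain ⟨_, _, rfl⟩ := hA
    obtain ⟨_, _, h⟩ := h.isAnd_iff.2 hB
    cases h
  | @comp A C B g f ihg ihf =>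
    match C with
    | .pl _ => exact absurd hA f.not_isOr_of_pl
    | .and _ _ => exact ihf hu.2 hA ⟨_, _, rfl⟩
    | .or _ _ =>
      obtain ⟨Z, hZ, hZand⟩ := ihg hu.1 ⟨_, _, rfl⟩ hB
      have hrel := f.rel_delF hu.2
      rw [hZ, Option.rel_some_right] at hrel
      obtain ⟨Z', hZ', hZ'Z⟩ := hrel
      exact ⟨Z', hZ', hZ'Z.isAnd_iff.2 hZand⟩
  | orM => obtain ⟨_, _, h⟩ := hB; cases h
  | andM => obtain ⟨_, _, h⟩ := hA; cases h
  | ck => rcases hu.delF_source with h | h <;> exact ⟨_, h, _, _, rfl⟩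

end Deletion

theorem SplitC.separated {X₁ X₂ S T U V : Frm2} (hd : Disjoint (ltr X₁) (ltr X₂))
    (h : SplitC X₁ X₂ S T U V) : Separated (ltr X₁) S T U V := by
  rcases h with ⟨h₁, h₂⟩ | ⟨h₂, h₁⟩
  · exact .inl ⟨h₁, hd.mono_right h₂⟩
  · exact .inr ⟨hd.mono_right h₂, h₁⟩

theorem Splitting.delF_target {X₁ X₂ Y : Frm2} {u : ST (X₁.or X₂) Y} (hs : Splitting X₁ X₂ u)
    (hd : Disjoint (ltr X₁) (ltr X₂)) :
    (∃ Z, delF (ltr X₁) Y = some Z ∧ AC Z X₂) ∧ (Y.IsAnd → X₂.IsAnd) := by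
  have hsep : AllCk (Separated (ltr X₁)) u := AllCk.mono (SplitC.separated hd) hs
  have hsrc : delF (ltr X₁) (X₁.or X₂) = some X₂ := by
    rw [delF_or, delF_eq_none subset_rfl, delF_eq_self hd]; rfl
  refine ⟨?_, fun hY => ?_⟩
  · have hrel := u.rel_delF hsep
    rw [hsrc, Option.rel_some_left] at hrel
    obtain ⟨Z, hZ, hX₂Z⟩ := hrel
    exact ⟨Z, hZ, hX₂Z.symm⟩
  · obtain ⟨Z, hZ, hZand⟩ := u.isAnd_delF_source hsep ⟨_, _, rfl⟩ hY
    rw [hsrc, Option.some_inj] at hZ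
    exact hZ ▸ hZand

theorem splitting_arrow_deletion_general {X₁ X₂ Y : Frm2}
    (u : ST (X₁.or X₂) Y) (hX : Div2 (X₁.or X₂))
    (hs : Splitting X₁ X₂ u) :
    (∃ Z : Frm2, delF (ltr X₁) Y = some Z ∧ AC Z X₂) ∧
    (∃ Z : Frm2, delF (ltr X₂) Y = some Z ∧ AC Z X₁) ∧
    (∀ Y₁ Y₂ : Frm2, Y = Y₁.and Y₂ →
      (∃ A B : Frm2, X₁ = A.and B) ∧ (∃ A B : Frm2, X₂ = A.and B)) := by
  have hd := hX.disjoint_ltr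
  let u' : ST (X₂.or X₁) Y := u.comp (.str (AC.orComm X₂ X₁))
  have hs' : Splitting X₂ X₁ u' := ⟨AllCk.mono Or.symm hs, trivial⟩
  obtain ⟨h₁, hand₂⟩ := hs.delF_target hd
  obtain ⟨h₂, hand₁⟩ := hs'.delF_target hd.symm
  exact ⟨h₁, h₂, fun Y₁ Y₂ hY => ⟨hand₁ ⟨Y₁, Y₂, hY⟩, hand₂ ⟨Y₁, Y₂, hY⟩⟩⟩

/-- Lemmas 5.6 and 5.7 : if `u : X₁∨X₂ → Y` is (X₁,X₂)-splitting, then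
`Y^{-X₁} = X₂` and `Y^{-X₂} = X₁` (as form sets); moreover if `Y` is a
conjunction `Y₁∧Y₂`, then the main connective of both `X₁` and `X₂` is ∧. -/
theorem splitting_arrow_deletion {X₁ X₂ Y : Frm2}
    (u : ST (X₁.or X₂) Y) (hX : Div2 (X₁.or X₂)) (hY : Div2 Y)
    (hs : Splitting X₁ X₂ u) :
    (∃ Z : Frm2, delF (ltr X₁) Y = some Z ∧ AC Z X₂) ∧
    (∃ Z : Frm2, delF (ltr X₂) Y = some Z ∧ AC Z X₁) ∧
    (∀ Y₁ Y₂ : Frm2, Y = Y₁.and Y₂ →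
      (∃ A B : Frm2, X₁ = A.and B) ∧ (∃ A B : Frm2, X₂ = A.and B)) :=
  splitting_arrow_deletion_general u hX hs

end AST
end
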